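/- arXiv:1203.2429 — 7 statements merged into one kernel-verified Lean document; each statement's English description precedes it below -/
import Mathlib

section
/- A finite semigroup S is not Mal'cev nilpotent if and only if there exist a positive integer m, distinct elements x, y in S, and elements w_1, ..., w_m in S^1 such that x = λ_m(x, y, w_1, ..., w_m) and y = ρ_m(x, y, w_1, ..., w_m). -/
/-! For finite `S` the pairs `(λ_k, ρ_k)` must repeat within `|S|² + 1` steps; as equality
`λ_k = ρ_k` persists, a repeat before a failure of nilpotency is a cycle through two distinct
elements. Conversely, repeating the parameters of such a cycle periodically keeps `λ_n ≠ ρ_n`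
for every `n`. -/

/-- One multiplication step `a · w · b` where `w` ranges over `S¹`
(`none` playing the role of the adjoined identity). -/
def mulW {S : Type*} [Semigroup S] (a : S) (w : Option S) (b : S) : S :=
  match w with
  | none => a * b
  | some c => a * c * b

/-- The Mal'cev sequences: `(malcev x y w n).1 = λ_n` and `(malcev x y w n).2 = ρ_n`,
with `λ_0 = x`, `ρ_0 = y`, `λ_{n+1} = λ_n w_{n+1} ρ_n`, `ρ_{n+1} = ρ_n w_{n+1} λ_n`. -/
def malcev {S : Type*} [Semigroup S] (x y : S) (w : ℕ → Option S) : ℕ → S × S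
  | 0 => (x, y)
  | n + 1 =>
      let p := malcev x y w n
      (mulW p.1 (w n) p.2, mulW p.2 (w n) p.1)

/-- Mal'cev nilpotency of a (multiplicatively closed) subset `A` of `S`,
computed with parameters from `A¹`. -/
def SetMN {S : Type*} [Semigroup S] (A : Set S) : Prop :=
  ∃ n : ℕ, 0 < n ∧ ∀ x ∈ A, ∀ y ∈ A, ∀ w : ℕ → Option S,
    (∀ k c, w k = some c → c ∈ A) →
    (malcev x y w n).1 = (malcev x y w n).2

/-- A semigroup is Mal'cev nilpotent. -/
def IsMN (S : Type*) [Semigroup S] : Prop := SetMN (Set.univ : Set S)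

/-- Equality in the Rees quotient by (the possibly empty ideal) `I`. -/
def ReesEq {S : Type*} [Semigroup S] (I : Set S) (a b : S) : Prop :=
  a = b ∨ (a ∈ I ∧ b ∈ I)

/-- Mal'cev nilpotency of the Rees quotient `A / I` (computed by lifting to `A`). -/
def SetMNMod {S : Type*} [Semigroup S] (I A : Set S) : Prop :=
  ∃ n : ℕ, 0 < n ∧ ∀ x ∈ A, ∀ y ∈ A, ∀ w : ℕ → Option S,
    (∀ k c, w k = some c → c ∈ A) →
    ReesEq I (malcev x y w n).1 (malcev x y w n).2

/-- `I` is an ideal of (the mul-closed subset) `T`; the empty set counts as an ideal. -/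
def IsIdealIn {S : Type*} [Semigroup S] (T I : Set S) : Prop :=
  I ⊆ T ∧ ∀ a ∈ I, ∀ t ∈ T, t * a ∈ I ∧ a * t ∈ I

/-- Edge of the upper non-nilpotent graph `N_S`: `⟨a,b⟩` is not Mal'cev nilpotent. -/
def NEdge {S : Type*} [Semigroup S] (a b : S) : Prop :=
  a ≠ b ∧ ¬ SetMN (Subsemigroup.closure ({a, b} : Set S) : Set S)

/-- The generating set of the subsemigroup `⟨x, y, w_1, …, w_m⟩`. -/
def genSet {S : Type*} [Semigroup S] (x y : S) (w : ℕ → Option S) (m : ℕ) : Set S :=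
  {x, y} ∪ {c | ∃ k, k < m ∧ w k = some c}

/-- A pseudo-nilpotent semigroup. -/
def IsPN (S : Type*) [Semigroup S] : Prop :=
  ∀ (x y : S) (w : ℕ → Option S) (m : ℕ) (I : Set S),
    IsIdealIn (Subsemigroup.closure (genSet x y w m) : Set S) I →
    (malcev x y w m).1 ∉ I → (malcev x y w m).2 ∉ I →
    (∃ t, t < m ∧ (malcev x y w t).1 ≠ (malcev x y w t).2 ∧
      malcev x y w t = malcev x y w m) →
    ∀ i ≤ m, ¬ SetMNMod I
      (Subsemigroup.closure ({(malcev x y w i).1, (malcev x y w i).2} : Set S) : Set S)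

theorem exists_lt_le_card_map_eq {α : Type*} [Finite α] (f : ℕ → α) :
    ∃ s t, s < t ∧ t ≤ Nat.card α ∧ f s = f t := by
  have : Fintype α := Fintype.ofFinite α
  have hcard : Fintype.card α < Fintype.card (Fin (Nat.card α + 1)) := by simp
  obtain ⟨a, b, hab, hfab⟩ := Fintype.exists_ne_map_eq_of_card_lt (fun k : Fin _ => f k) hcard
  rcases Fin.lt_or_lt_of_ne hab with h | h
  · exact ⟨a, b, h, Nat.lt_succ_iff.mp b.isLt, hfab⟩
  · exact ⟨b, a, h, Nat.lt_succ_iff.mp a.isLt, hfab.symm⟩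

namespace malcev

variable {S : Type*} [Semigroup S] (x y : S) (w : ℕ → Option S)

theorem congr_params {w' : ℕ → Option S} {n : ℕ} (h : ∀ k < n, w k = w' k) :
    malcev x y w n = malcev x y w' n := by
  induction n with
  | zero => rfl
  | succ n ih =>
    simp only [malcev]
    rw [ih fun k hk => h k (Nat.lt_succ_of_lt hk), h n (Nat.lt_succ_self n)]

theorem add (s k : ℕ) :
    malcev x y w (s + k) =
      malcev (malcev x y w s).1 (malcev x y w s).2 (fun j => w (s + j)) k := by
  induction k with
  | zero => rfl
  | succ k ih => rw [← Nat.add_assoc]; simp only [malcev, ih]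

theorem fst_eq_snd_of_le {k n : ℕ} (hkn : k ≤ n)
    (h : (malcev x y w k).1 = (malcev x y w k).2) :
    (malcev x y w n).1 = (malcev x y w n).2 := by
  induction n, hkn using Nat.le_induction with
  | base => exact h
  | succ n _ ih => simp only [malcev, ih]

theorem periodic {m : ℕ} (hw : Function.Periodic w m) (hm : malcev x y w m = (x, y)) :
    Function.Periodic (malcev x y w) m := by
  intro k
  rw [Nat.add_comm, add, hm]
  congr
  funext j
  rw [Nat.add_comm, hw]

end malcev

theorem not_isMN_of_malcev_eq_self {S : Type*} [Semigroup S] {m : ℕ} (hm : 0 < m) {x y : S}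
    (hxy : x ≠ y) {w : ℕ → Option S} (hw : malcev x y w m = (x, y)) : ¬ IsMN S := by
  rintro ⟨n, -, hn⟩
  set w' : ℕ → Option S := fun k => w (k % m)
  have hw' : malcev x y w' m = (x, y) := by
    rw [← hw]
    exact malcev.congr_params x y w' fun k hk => congrArg w (Nat.mod_eq_of_lt hk)
  have hperiodic : Function.Periodic (malcev x y w') m :=
    malcev.periodic x y w' (fun k => congrArg w (Nat.periodic_mod m k)) hw'
  have hmod : malcev x y w' (n % m) = malcev x y w (n % m) :=
    malcev.congr_params x y w' fun k hk =>
      congrArg w (Nat.mod_eq_of_lt (hk.trans (Nat.mod_lt n hm)))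
  have hfst_eq_snd := hn x trivial y trivial w' fun _ _ _ => trivial
  rw [← hperiodic.map_mod_nat, hmod] at hfst_eq_snd
  have := malcev.fst_eq_snd_of_le x y w (Nat.mod_lt n hm).le hfst_eq_snd
  rw [hw] at this
  exact hxy this

theorem exists_malcev_eq_self_of_fst_ne_snd {S : Type*} [Semigroup S] [Finite S] {x y : S}
    {w : ℕ → Option S} {n : ℕ} (hn : Nat.card (S × S) ≤ n)
    (hne : (malcev x y w n).1 ≠ (malcev x y w n).2) :
    ∃ m : ℕ, 0 < m ∧ ∃ x y : S, x ≠ y ∧ ∃ w : ℕ → Option S, malcev x y w m = (x, y) := by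
  obtain ⟨s, t, hst, ht, hrepeat⟩ := exists_lt_le_card_map_eq (malcev x y w)
  refine ⟨t - s, Nat.sub_pos_of_lt hst, _, _,
    fun h => hne (malcev.fst_eq_snd_of_le x y w (hst.le.trans (ht.trans hn)) h),
    fun j => w (s + j), ?_⟩
  rw [← malcev.add, Nat.add_sub_cancel' hst.le, ← hrepeat]

/-- A finite semigroup `S` is not Mal'cev nilpotent iff there exist `m > 0`,
distinct `x, y ∈ S` and `w_1, …, w_m ∈ S¹` with `x = λ_m` and `y = ρ_m`. -/
theorem stmt0 {S : Type*} [Semigroup S] [Finite S] :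
    ¬ IsMN S ↔ ∃ m : ℕ, 0 < m ∧ ∃ x y : S, x ≠ y ∧ ∃ w : ℕ → Option S,
      malcev x y w m = (x, y) := by
  constructor
  · intro h
    simp only [IsMN, SetMN, not_exists, not_and, not_forall] at h
    obtain ⟨x, -, y, -, w, -, hne⟩ := h (Nat.card (S × S) + 1) (Nat.succ_pos _)
    exact exists_malcev_eq_self_of_fst_ne_snd (Nat.le_succ _) hne
  · rintro ⟨m, hm, x, y, hxy, w, hw⟩
    exact not_isMN_of_malcev_eq_self hm hxy hw
end

section
/- If S is a pseudo-nilpotent finite semigroup and I is an ideal of S such that both I and the Rees quotient S/I are Mal'cev nilpotent, then S is Mal'cev nilpotent. -/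
/-!
Suppose `S` is not Mal'cev nilpotent and pick `x, y, w` with `λ_n ≠ ρ_n` for `n = |S × S| + 1`.
By pigeonhole `(λ_t, ρ_t) = (λ_m, ρ_m)` for some `t < m < n`, and `λ_t ≠ ρ_t` since equality
would persist up to `n`. If `λ_m` or `ρ_m` lies in `I`, the sequence is absorbed by `I` after
step `t`, so by periodicity `⟨λ_t, ρ_t⟩ ⊆ I` is nilpotent, against pseudo-nilpotency with the empty
ideal. Otherwise pseudo-nilpotency with the ideal `I ∩ T` of `T = ⟨x, y, w_1, …, w_m⟩` says that
`⟨x, y⟩ / (I ∩ T)` is not nilpotent, while it inherits nilpotency from `S / I`.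
-/

lemma Finite.exists_lt_le_natCard_map_eq {α : Type*} [Finite α] (f : ℕ → α) :
    ∃ t m, t < m ∧ m ≤ Nat.card α ∧ f t = f m := by
  have hninj : ¬ Function.Injective fun i : Fin (Nat.card α + 1) => f i := fun h => by
    simpa using Nat.card_le_card_of_injective _ h
  simp only [Function.Injective, not_forall] at hninj
  obtain ⟨i, j, hf, hij⟩ := hninj
  rcases lt_or_gt_of_ne (Fin.val_injective.ne hij) with h | h
  · exact ⟨i, j, h, Nat.lt_succ_iff.1 j.2, hf⟩
  · exact ⟨j, i, h, Nat.lt_succ_iff.1 i.2, hf.symm⟩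

section Semigroup

variable {S : Type*} [Semigroup S]

lemma malcev_succ (x y : S) (w : ℕ → Option S) (n : ℕ) :
    malcev x y w (n + 1) =
      (mulW (malcev x y w n).1 (w n) (malcev x y w n).2,
        mulW (malcev x y w n).2 (w n) (malcev x y w n).1) :=
  rfl

lemma mulW_mem (M : Subsemigroup S) {a b : S} (ha : a ∈ M) (hb : b ∈ M) {c : Option S}
    (hc : ∀ d, c = some d → d ∈ M) : mulW a c b ∈ M := by
  cases c with
  | none => exact mul_mem ha hb
  | some d => exact mul_mem (mul_mem ha (hc d rfl)) hb

lemma malcev_mem (M : Subsemigroup S) {x y : S} (hx : x ∈ M) (hy : y ∈ M)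
    {w : ℕ → Option S} (hw : ∀ k c, w k = some c → c ∈ M) (n : ℕ) :
    (malcev x y w n).1 ∈ M ∧ (malcev x y w n).2 ∈ M := by
  induction n with
  | zero => exact ⟨hx, hy⟩
  | succ n ih => exact ⟨mulW_mem M ih.1 ih.2 (hw n), mulW_mem M ih.2 ih.1 (hw n)⟩

lemma malcev_eq_of_le {x y : S} {w : ℕ → Option S} {k n : ℕ}
    (h : (malcev x y w k).1 = (malcev x y w k).2) (hkn : k ≤ n) :
    (malcev x y w n).1 = (malcev x y w n).2 := by
  induction n, hkn using Nat.le_induction with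
  | base => exact h
  | succ n _ ih => rw [malcev_succ, ih]

lemma SetMN.mono {A B : Set S} (hAB : A ⊆ B) (hB : SetMN B) : SetMN A := by
  obtain ⟨n, hn, h⟩ := hB
  exact ⟨n, hn, fun x hx y hy w hw => h x (hAB hx) y (hAB hy) w fun k c hc => hAB (hw k c hc)⟩

lemma SetMN.setMNMod {A : Set S} (hA : SetMN A) (I : Set S) : SetMNMod I A := by
  obtain ⟨n, hn, h⟩ := hA
  exact ⟨n, hn, fun x hx y hy w hw => Or.inl (h x hx y hy w hw)⟩

lemma SetMNMod.mono {I A B : Set S} (hAB : A ⊆ B) (hB : SetMNMod I B) : SetMNMod I A := by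
  obtain ⟨n, hn, h⟩ := hB
  exact ⟨n, hn, fun x hx y hy w hw => h x (hAB hx) y (hAB hy) w fun k c hc => hAB (hw k c hc)⟩

lemma SetMNMod.inter_subsemigroup {I : Set S} {M : Subsemigroup S} (hM : SetMNMod I M) :
    SetMNMod (I ∩ M) M := by
  obtain ⟨n, hn, h⟩ := hM
  refine ⟨n, hn, fun x hx y hy w hw => ?_⟩
  obtain ⟨hl, hr⟩ := malcev_mem M hx hy hw n
  exact (h x hx y hy w hw).imp_right fun ⟨hlI, hrI⟩ => ⟨⟨hlI, hl⟩, ⟨hrI, hr⟩⟩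

lemma isIdealIn_empty (T : Set S) : IsIdealIn T ∅ :=
  ⟨Set.empty_subset T, fun _ ha => ha.elim⟩

lemma IsIdealIn.inter_subsemigroup {I : Set S} (hI : IsIdealIn Set.univ I)
    (M : Subsemigroup S) : IsIdealIn (M : Set S) (I ∩ M) :=
  ⟨Set.inter_subset_right, fun a ha s hs =>
    ⟨⟨(hI.2 a ha.1 s trivial).1, mul_mem hs ha.2⟩, ⟨(hI.2 a ha.1 s trivial).2, mul_mem ha.2 hs⟩⟩⟩

lemma IsIdealIn.closure_subset {I A : Set S} (hI : IsIdealIn Set.univ I) (hA : A ⊆ I) :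
    (Subsemigroup.closure A : Set S) ⊆ I :=
  Subsemigroup.closure_le (S := ⟨I, fun {_ b} _ hb => (hI.2 b hb _ trivial).1⟩) |>.2 hA

lemma IsIdealIn.mulW_mem {I : Set S} (hI : IsIdealIn Set.univ I) {a b : S}
    (h : a ∈ I ∨ b ∈ I) (c : Option S) : mulW a c b ∈ I := by
  cases c with
  | none =>
    rcases h with h | h
    · exact (hI.2 a h b trivial).2
    · exact (hI.2 b h a trivial).1
  | some d =>
    rcases h with h | h
    · exact (hI.2 _ (hI.2 a h d trivial).2 b trivial).2
    · exact (hI.2 b h _ trivial).1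

lemma IsIdealIn.malcev_mem_of_lt {I : Set S} (hI : IsIdealIn Set.univ I)
    {x y : S} {w : ℕ → Option S} {k n : ℕ}
    (h : (malcev x y w k).1 ∈ I ∨ (malcev x y w k).2 ∈ I) (hkn : k < n) :
    (malcev x y w n).1 ∈ I ∧ (malcev x y w n).2 ∈ I := by
  induction n, hkn using Nat.le_induction with
  | base => exact ⟨hI.mulW_mem h _, hI.mulW_mem h.symm _⟩
  | succ n _ ih => exact ⟨hI.mulW_mem (Or.inl ih.1) _, hI.mulW_mem (Or.inl ih.2) _⟩

end Semigroup

/-- If `S` is pseudo-nilpotent and finite, `I` is an ideal of `S`, and both `I`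
and the Rees quotient `S/I` are Mal'cev nilpotent, then `S` is Mal'cev nilpotent. -/
theorem stmt1 {S : Type*} [Semigroup S] [Finite S] (hPN : IsPN S) (I : Set S)
    (hI : IsIdealIn Set.univ I) (hInil : SetMN I) (hQnil : SetMNMod I Set.univ) :
    IsMN S := by
  by_contra hS
  simp only [IsMN, SetMN, not_exists, not_and, not_forall] at hS
  obtain ⟨x, -, y, -, w, -, hne⟩ := hS (Nat.card (S × S) + 1) (Nat.succ_pos _)
  obtain ⟨t, m, htm, hm, hper⟩ := Finite.exists_lt_le_natCard_map_eq (malcev x y w)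
  have hne_t : (malcev x y w t).1 ≠ (malcev x y w t).2 := fun h =>
    hne (malcev_eq_of_le h (by omega))
  have hcycle : ∃ t, t < m ∧ (malcev x y w t).1 ≠ (malcev x y w t).2 ∧
      malcev x y w t = malcev x y w m := ⟨t, htm, hne_t, hper⟩
  by_cases hmI : (malcev x y w m).1 ∈ I ∨ (malcev x y w m).2 ∈ I
  · have htI : (malcev x y w t).1 ∈ I ∧ (malcev x y w t).2 ∈ I :=
      hper ▸ hI.malcev_mem_of_lt (hper ▸ hmI) htm
    refine hPN x y w m ∅ (isIdealIn_empty _) id id hcycle t htm.le ?_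
    refine (hInil.mono (hI.closure_subset ?_)).setMNMod ∅
    exact Set.pair_subset htI.1 htI.2
  · set T := Subsemigroup.closure (genSet x y w m)
    refine hPN x y w m (I ∩ T) (hI.inter_subsemigroup T) (fun h => hmI (Or.inl h.1))
      (fun h => hmI (Or.inr h.1)) hcycle 0 m.zero_le ?_
    refine ((hQnil.mono (Set.subset_univ _)).inter_subsemigroup (M := T)).mono ?_
    exact Subsemigroup.closure_le.2 (Set.subset_union_left.trans Subsemigroup.subset_closure)
end

section
/- A finite monoid is pseudo-nilpotent if and only if it is Mal'cev nilpotent. -/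
section MalcevRun

variable {S : Type*} [Semigroup S]

def malcevRun (x y : S) (w : ℕ → S) : ℕ → S × S :=
  malcev x y fun k => some (w k)

variable {x y : S} {w : ℕ → S}

@[simp]
lemma malcevRun_zero : malcevRun x y w 0 = (x, y) := rfl

lemma malcevRun_succ (n : ℕ) :
    malcevRun x y w (n + 1) =
      ((malcevRun x y w n).1 * w n * (malcevRun x y w n).2,
        (malcevRun x y w n).2 * w n * (malcevRun x y w n).1) := rfl

lemma malcevRun_add (m n : ℕ) :
    malcevRun x y w (m + n) =
      malcevRun (malcevRun x y w m).1 (malcevRun x y w m).2 (fun k => w (m + k)) n := by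
  induction n with
  | zero => rfl
  | succ n ih => rw [← add_assoc, malcevRun_succ, ih, malcevRun_succ]

lemma malcevRun_congr {w' : ℕ → S} {n : ℕ} (h : ∀ k < n, w k = w' k) :
    malcevRun x y w n = malcevRun x y w' n := by
  induction n with
  | zero => rfl
  | succ n ih =>
    rw [malcevRun_succ, malcevRun_succ, ih fun k hk => h k (by omega), h n n.lt_succ_self]

lemma malcevRun_fst_eq_snd_of_le {m n : ℕ} (hmn : m ≤ n)
    (h : (malcevRun x y w m).1 = (malcevRun x y w m).2) :
    (malcevRun x y w n).1 = (malcevRun x y w n).2 := by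
  induction n, hmn using Nat.le_induction with
  | base => exact h
  | succ n _ ih => simp only [malcevRun_succ, ih]

lemma malcevRun_mod {P : ℕ} (hP : 0 < P) (hloop : malcevRun x y w P = (x, y)) (n : ℕ) :
    malcevRun x y (fun k => w (k % P)) n = malcevRun x y w (n % P) := by
  set c : ℕ → S := fun k => w (k % P)
  have hbelow : ∀ r ≤ P, malcevRun x y c r = malcevRun x y w r := fun r hr =>
    malcevRun_congr fun k hk => congrArg w (Nat.mod_eq_of_lt (by omega))
  have hshift : (fun k => c (P + k)) = c := funext fun k => by simp [c]
  have hperiod : ∀ q r, malcevRun x y c (P * q + r) = malcevRun x y c r := by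
    intro q r
    induction q with
    | zero => simp
    | succ q ih =>
      rw [show P * (q + 1) + r = P + (P * q + r) by ring, malcevRun_add, hbelow P le_rfl,
        hloop, hshift, ih]
  rw [← Nat.div_add_mod n P, hperiod, Nat.div_add_mod, hbelow _ (Nat.mod_lt _ hP).le]

lemma map_malcevRun {T : Type*} [Semigroup T] (f : S →ₙ* T) (n : ℕ) :
    Prod.map f f (malcevRun x y w n) = malcevRun (f x) (f y) (fun k => f (w k)) n := by
  induction n with
  | zero => rfl
  | succ n ih =>
    rw [malcevRun_succ, malcevRun_succ, ← ih]
    simp only [Prod.map, map_mul]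

lemma malcevRun_add_mod_of_eq {t m : ℕ} (htm : t < m)
    (h : malcevRun x y w t = malcevRun x y w m) (n : ℕ) :
    malcevRun (malcevRun x y w t).1 (malcevRun x y w t).2 (fun k => w (t + k % (m - t))) n =
      malcevRun x y w (t + n % (m - t)) := by
  rw [malcevRun_add t]
  refine malcevRun_mod (w := fun k => w (t + k)) (by omega) ?_ n
  rw [← malcevRun_add, show t + (m - t) = m by omega, ← h]

end MalcevRun

lemma malcev_eq_malcevRun {M : Type*} [Monoid M] (x y : M) (w : ℕ → Option M) :
    malcev x y w = malcevRun x y fun k => (w k).getD 1 := by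
  have hmulW : ∀ (a b : M) (o : Option M), mulW a o b = a * o.getD 1 * b := by
    intro a b o; cases o <;> simp [mulW]
  funext n
  induction n with
  | zero => rfl
  | succ n ih =>
    rw [malcevRun_succ, ← ih]
    simp only [malcev, hmulW]

section Green

variable {M : Type*} [Monoid M]

def RLe (x y : M) : Prop := ∃ u, x = y * u

def LLe (x y : M) : Prop := ∃ u, x = u * y

def JLe (x y : M) : Prop := ∃ u v, x = u * y * v

def REquiv (x y : M) : Prop := RLe x y ∧ RLe y x

def LEquiv (x y : M) : Prop := LLe x y ∧ LLe y x

def HEquiv (x y : M) : Prop := REquiv x y ∧ LEquiv x y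

variable {x y z e : M}

lemma RLe.refl (x : M) : RLe x x := ⟨1, (mul_one x).symm⟩

lemma RLe.trans (h₁ : RLe x y) (h₂ : RLe y z) : RLe x z := by
  obtain ⟨u, rfl⟩ := h₁
  obtain ⟨v, rfl⟩ := h₂
  exact ⟨v * u, mul_assoc _ _ _⟩

lemma rLe_mul_right (x y : M) : RLe (x * y) x := ⟨y, rfl⟩

lemma LLe.refl (x : M) : LLe x x := ⟨1, (one_mul x).symm⟩

lemma LLe.trans (h₁ : LLe x y) (h₂ : LLe y z) : LLe x z := by
  obtain ⟨u, rfl⟩ := h₁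
  obtain ⟨v, rfl⟩ := h₂
  exact ⟨u * v, (mul_assoc _ _ _).symm⟩

lemma lLe_mul_left (x y : M) : LLe (x * y) y := ⟨x, rfl⟩

lemma JLe.refl (x : M) : JLe x x := ⟨1, 1, by simp⟩

lemma JLe.trans (h₁ : JLe x y) (h₂ : JLe y z) : JLe x z := by
  obtain ⟨u, v, rfl⟩ := h₁
  obtain ⟨p, q, rfl⟩ := h₂
  exact ⟨u * p, q * v, by simp only [mul_assoc]⟩

lemma RLe.jLe (h : RLe x y) : JLe x y := by
  obtain ⟨u, rfl⟩ := h
  exact ⟨1, u, by rw [one_mul]⟩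

lemma LLe.jLe (h : LLe x y) : JLe x y := by
  obtain ⟨u, rfl⟩ := h
  exact ⟨u, 1, by rw [mul_one]⟩

lemma REquiv.refl (x : M) : REquiv x x := ⟨RLe.refl x, RLe.refl x⟩

lemma REquiv.symm (h : REquiv x y) : REquiv y x := ⟨h.2, h.1⟩

lemma REquiv.trans (h₁ : REquiv x y) (h₂ : REquiv y z) : REquiv x z :=
  ⟨h₁.1.trans h₂.1, h₂.2.trans h₁.2⟩

lemma LEquiv.refl (x : M) : LEquiv x x := ⟨LLe.refl x, LLe.refl x⟩

lemma LEquiv.symm (h : LEquiv x y) : LEquiv y x := ⟨h.2, h.1⟩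

lemma LEquiv.trans (h₁ : LEquiv x y) (h₂ : LEquiv y z) : LEquiv x z :=
  ⟨h₁.1.trans h₂.1, h₂.2.trans h₁.2⟩

lemma HEquiv.refl (x : M) : HEquiv x x := ⟨REquiv.refl x, LEquiv.refl x⟩

lemma HEquiv.symm (h : HEquiv x y) : HEquiv y x := ⟨h.1.symm, h.2.symm⟩

lemma HEquiv.trans (h₁ : HEquiv x y) (h₂ : HEquiv y z) : HEquiv x z :=
  ⟨h₁.1.trans h₂.1, h₁.2.trans h₂.2⟩

lemma IsIdempotentElem.mul_eq_of_rLe (he : IsIdempotentElem e) (h : RLe x e) :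
    e * x = x := by
  obtain ⟨u, rfl⟩ := h
  rw [← mul_assoc, he.eq]

lemma IsIdempotentElem.mul_eq_of_lLe (he : IsIdempotentElem e) (h : LLe x e) :
    x * e = x := by
  obtain ⟨u, rfl⟩ := h
  rw [mul_assoc, he.eq]

lemma IsIdempotentElem.eq_of_hEquiv {f : M} (he : IsIdempotentElem e) (hf : IsIdempotentElem f)
    (h : HEquiv e f) : e = f :=
  calc e = f * e := (hf.mul_eq_of_rLe h.1.1).symm
    _ = f := he.mul_eq_of_lLe h.2.2

lemma exists_lLe_of_mem_closure {s : Set M} {u : M}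
    (hu : u ∈ Subsemigroup.closure s) : ∃ g ∈ s, LLe u g := by
  induction hu using Subsemigroup.closure_induction with
  | mem u hu => exact ⟨u, hu, LLe.refl u⟩
  | mul u v _ _ _ hv =>
    obtain ⟨g, hg, hvg⟩ := hv
    exact ⟨g, hg, (lLe_mul_left u v).trans hvg⟩

lemma exists_rLe_of_mem_closure {s : Set M} {u : M}
    (hu : u ∈ Subsemigroup.closure s) : ∃ g ∈ s, RLe u g := by
  induction hu using Subsemigroup.closure_induction with
  | mem u hu => exact ⟨u, hu, RLe.refl u⟩
  | mul u v _ _ hu _ =>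
    obtain ⟨g, hg, hug⟩ := hu
    exact ⟨g, hg, (rLe_mul_right u v).trans hug⟩

variable [Finite M]

lemma exists_isIdempotentElem_pow (x : M) : ∃ n, IsIdempotentElem (x ^ (n + 1)) := by
  obtain ⟨i, j, hne, hij⟩ := Finite.exists_ne_map_eq_of_infinite (x ^ · : ℕ → M)
  wlog hlt : i < j generalizing i j
  · exact this j i hne.symm hij.symm (by omega)
  have hstep : ∀ k, i ≤ k → x ^ (k + (j - i)) = x ^ k := fun k hk => by
    rw [show k + (j - i) = k - i + j by omega, pow_add, ← hij, ← pow_add, Nat.sub_add_cancel hk]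
  have hperiod : ∀ q k, i ≤ k → x ^ (k + q * (j - i)) = x ^ k := by
    intro q
    induction q with
    | zero => simp
    | succ q ih =>
      intro k hk
      rw [show k + (q + 1) * (j - i) = k + (j - i) + q * (j - i) by ring, ih _ (by omega),
        hstep k hk]
  obtain ⟨n, hn⟩ : ∃ n, n + 1 = (i + 1) * (j - i) :=
    ⟨_, Nat.succ_pred_eq_of_pos (Nat.mul_pos i.succ_pos (by omega))⟩
  have hi : i ≤ (i + 1) * (j - i) := by
    have := Nat.le_mul_of_pos_right (i + 1) (Nat.sub_pos_of_lt hlt)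
    omega
  exact ⟨n, by rw [IsIdempotentElem, ← pow_add, hn, hperiod (i + 1) _ hi]⟩

lemma JLe.rLe_self_mul (h : JLe x (x * y)) : RLe x (x * y) := by
  obtain ⟨u, v, huv⟩ := h
  have hiter : ∀ n, x = u ^ n * x * (y * v) ^ n := by
    intro n
    induction n with
    | zero => simp
    | succ n ih =>
      calc x = u ^ n * (u * (x * y) * v) * (y * v) ^ n := by rw [← huv]; exact ih
        _ = u ^ (n + 1) * x * (y * v) ^ (n + 1) := by
          rw [pow_succ, pow_succ']; simp only [mul_assoc]
  obtain ⟨n, hn⟩ := exists_isIdempotentElem_pow (y * v)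
  have hfix : x * (y * v) ^ (n + 1) = x := by
    conv_lhs => rw [hiter (n + 1), mul_assoc, hn.eq]
    exact (hiter _).symm
  refine ⟨v * (y * v) ^ n, ?_⟩
  rw [← mul_assoc, mul_assoc x, mul_assoc x, ← pow_succ', hfix]

lemma JLe.lLe_mul_self (h : JLe y (x * y)) : LLe y (x * y) := by
  obtain ⟨u, v, huv⟩ := h
  have hiter : ∀ n, y = (u * x) ^ n * y * v ^ n := by
    intro n
    induction n with
    | zero => simp
    | succ n ih =>
      calc y = (u * x) ^ n * (u * (x * y) * v) * v ^ n := by rw [← huv]; exact ih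
        _ = (u * x) ^ (n + 1) * y * v ^ (n + 1) := by
          rw [pow_succ, pow_succ']; simp only [mul_assoc]
  obtain ⟨n, hn⟩ := exists_isIdempotentElem_pow (u * x)
  have hfix : (u * x) ^ (n + 1) * y = y := by
    conv_lhs => rw [hiter (n + 1), ← mul_assoc, ← mul_assoc, hn.eq]
    exact (hiter _).symm
  refine ⟨(u * x) ^ n * u, ?_⟩
  rw [mul_assoc, ← mul_assoc u, ← mul_assoc, ← pow_succ, hfix]

lemma JLe.rEquiv_self_mul (h : JLe x (x * y)) : REquiv (x * y) x :=
  ⟨rLe_mul_right x y, h.rLe_self_mul⟩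

lemma JLe.lEquiv_mul_self (h : JLe y (x * y)) : LEquiv (x * y) y :=
  ⟨lLe_mul_left x y, h.lLe_mul_self⟩

lemma exists_isIdempotentElem_rEquiv_lEquiv (hx : JLe x (x * y)) (hy : JLe y (x * y)) :
    ∃ e, IsIdempotentElem e ∧ REquiv e y ∧ LEquiv e x := by
  obtain ⟨z, hz⟩ := hx.rLe_self_mul
  obtain ⟨n, hn⟩ := exists_isIdempotentElem_pow (y * z)
  set e := (y * z) ^ (n + 1)
  have hxe : x = x * e := by
    have : ∀ k, x = x * (y * z) ^ k := by
      intro k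
      induction k with
      | zero => simp
      | succ k ih => rw [pow_succ, ← mul_assoc, ← ih, ← mul_assoc, ← hz]
    exact this _
  have hey : e = y * (z * (y * z) ^ n) := by rw [← mul_assoc, ← pow_succ']
  have hyx : JLe y x := hy.trans (rLe_mul_right x y).jLe
  have hye : RLe y e := by
    rw [hey]
    refine JLe.rLe_self_mul ?_
    rw [← hey]
    exact hyx.trans (LLe.jLe ⟨x, hxe⟩)
  have hex : LLe e x := by
    rw [hxe]
    refine JLe.lLe_mul_self ?_
    rw [← hxe]
    exact (RLe.jLe ⟨_, hey⟩).trans hyx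
  exact ⟨e, hn, ⟨⟨_, hey⟩, hye⟩, ⟨hex, ⟨x, hxe⟩⟩⟩

lemma HEquiv.mul_mul {x' y' : M} (hx : HEquiv x' x) (hy : HEquiv y' y)
    (hxJ : JLe x (x * z * y)) (hyJ : JLe y (x * z * y)) :
    HEquiv (x' * z * y') (x * z * y) := by
  have hR : REquiv (x * z * y) x := by
    rw [mul_assoc] at hxJ ⊢
    exact hxJ.rEquiv_self_mul
  have hL : LEquiv (x * z * y) y := hyJ.lEquiv_mul_self
  have hJ : JLe (x * z * y) (x' * z * y') := by
    obtain ⟨s, hs⟩ := hx.2.2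
    obtain ⟨t, ht⟩ := hy.1.2
    exact ⟨s, t, by rw [hs, ht]; simp only [mul_assoc]⟩
  have hR' : REquiv (x' * z * y') x' := by
    have h : JLe x' (x' * (z * y')) := by
      rw [← mul_assoc]
      exact hx.1.1.jLe.trans (hxJ.trans hJ)
    rw [mul_assoc]
    exact h.rEquiv_self_mul
  have hL' : LEquiv (x' * z * y') y' := (hy.2.1.jLe.trans (hyJ.trans hJ)).lEquiv_mul_self
  exact ⟨hR'.trans (hx.1.trans hR.symm), hL'.trans (hy.2.trans hL.symm)⟩

lemma HEquiv.mul (he : IsIdempotentElem e) (hx : HEquiv x e) (hy : HEquiv y e) :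
    HEquiv (x * y) e := by
  have h := hx.mul_mul (z := 1) hy (by rw [mul_one, he.eq]; exact JLe.refl e)
    (by rw [mul_one, he.eq]; exact JLe.refl e)
  rwa [mul_one, mul_one, he.eq] at h

lemma JLe.hEquiv_self_mul_mul_self (h : JLe e (e * x * e)) :
    HEquiv (e * x * e) e := by
  refine ⟨?_, h.lEquiv_mul_self⟩
  rw [mul_assoc] at h ⊢
  exact h.rEquiv_self_mul

lemma HEquiv.exists_mul_eq (he : IsIdempotentElem e) (hx : HEquiv x e) :
    ∃ y, HEquiv y e ∧ y * x = e := by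
  have hpow : ∀ n, HEquiv (x ^ (n + 1)) e := by
    intro n
    induction n with
    | zero => rwa [zero_add, pow_one]
    | succ n ih => rw [pow_succ]; exact ih.mul he hx
  obtain ⟨n, hn⟩ := exists_isIdempotentElem_pow x
  have hxn : x ^ (n + 1) = e := hn.eq_of_hEquiv he (hpow n)
  refine ⟨x ^ (2 * n + 1), hpow _, ?_⟩
  rw [← pow_succ, show 2 * n + 1 + 1 = (n + 1) + (n + 1) by ring, pow_add, hxn, he.eq]

def hClass (he : IsIdempotentElem e) : Subsemigroup M where
  carrier := {x | HEquiv x e}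
  mul_mem' hx hy := hx.mul he hy

@[reducible]
noncomputable def hClassGroup (he : IsIdempotentElem e) : Group (hClass he) :=
  letI : One (hClass he) := ⟨⟨e, HEquiv.refl e⟩⟩
  letI : Inv (hClass he) := ⟨fun x => ⟨_, (x.2.exists_mul_eq he).choose_spec.1⟩⟩
  Group.ofLeftAxioms (fun _ _ _ => mul_assoc _ _ _)
    (fun x => Subtype.ext (he.mul_eq_of_rLe x.2.1.1))
    (fun x => Subtype.ext (x.2.exists_mul_eq he).choose_spec.2)

end Green

def HasNoncollapsingRunFromOne (M : Type*) [Monoid M] : Prop :=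
  ∃ (x : M) (w : ℕ → M), ∀ k, (malcevRun x 1 w (k + 1)).1 ≠ (malcevRun x 1 w (k + 1)).2

lemma HasNoncollapsingRunFromOne.of_injective {G M : Type*} [Monoid G] [Monoid M]
    (f : G →ₙ* M) (hf : Function.Injective f) (h : HasNoncollapsingRunFromOne G) :
    HasNoncollapsingRunFromOne M := by
  obtain ⟨x, w, hw⟩ := h
  refine ⟨f x, fun k => f (w k), fun k hk => hw k (hf ?_)⟩
  have hrun : malcevRun (f x) 1 (fun k => f (w k)) (1 + k) =
      Prod.map f f (malcevRun x 1 w (1 + k)) := by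
    rw [malcevRun_add, malcevRun_add, map_malcevRun]
    congr 1 <;> simp [malcevRun_succ]
  rw [add_comm, hrun] at hk
  rwa [add_comm]

lemma hasNoncollapsingRunFromOne_of_mul_eq {M : Type*} [Monoid M] {u v : M} (hne : u ≠ v)
    (h : u * v = u ∧ v * u = v ∨ u * v = v ∧ v * u = u) : HasNoncollapsingRunFromOne M := by
  set w : ℕ → M := fun k => if k = 0 then v else 1
  have hpair : ∀ k, malcevRun u 1 w (k + 1) = (u, v) ∨ malcevRun u 1 w (k + 1) = (v, u) := by
    intro k
    induction k with
    | zero => rcases h with ⟨h₁, h₂⟩ | ⟨h₁, h₂⟩ <;> simp [w, malcevRun_succ, h₁, h₂]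
    | succ k ih =>
      rw [malcevRun_succ]
      rcases h with ⟨h₁, h₂⟩ | ⟨h₁, h₂⟩ <;> rcases ih with ih | ih <;> simp [w, ih, h₁, h₂]
  refine ⟨u, w, fun k => ?_⟩
  rcases hpair k with h' | h' <;> rw [h'] <;> simp [hne, hne.symm]

lemma hasNoncollapsingRunFromOne_of_commutator {G : Type*} [Group G] (d g : ℕ → G)
    (hd : ∀ k, d (k + 1) = (d k)⁻¹ * (g k)⁻¹ * d k * g k) (hne : ∀ k, d k ≠ 1) :
    HasNoncollapsingRunFromOne G := by
  set p : ℕ → G := fun k => d 0 * ((List.range k).map g).prod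
  -- the word is chosen so that `λ_k = p k` and `ρ_k⁻¹ * λ_k = d k`
  have hrun : ∀ k, malcevRun (d 0) 1 (fun k => g k * d k * (p k)⁻¹) k =
      (p k, p k * (d k)⁻¹) := by
    intro k
    induction k with
    | zero => simp [p]
    | succ k ih =>
      rw [malcevRun_succ, ih, hd]
      simp only [p, List.prod_range_succ]
      ext <;> group
  refine ⟨d 0, fun k => g k * d k * (p k)⁻¹, fun k => ?_⟩
  rw [hrun]
  simpa using hne (k + 1)

lemma HasNoncollapsingRunFromOne.not_isPN {M : Type*} [Monoid M] [Finite M]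
    (h : HasNoncollapsingRunFromOne M) : ¬ IsPN M := by
  obtain ⟨x, w, hw⟩ := h
  intro hPN
  obtain ⟨i, j, hij, heq⟩ :=
    Finite.exists_ne_map_eq_of_infinite fun k => malcevRun x 1 w (k + 1)
  wlog hlt : i < j generalizing i j
  · exact this j i hij.symm heq.symm (by omega)
  refine hPN x 1 (fun k => some (w k)) (j + 1) ∅ ⟨Set.empty_subset _, fun _ h => h.elim⟩
    (Set.notMem_empty _) (Set.notMem_empty _) ⟨i + 1, by omega, hw i, heq⟩ 0 (Nat.zero_le _)
    ⟨1, one_pos, fun u hu v hv w' hw' => Or.inl ?_⟩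
  have hcomm : ∀ p ∈ Subsemigroup.closure ({x, 1} : Set M),
      ∀ q ∈ Subsemigroup.closure ({x, 1} : Set M), p * q = q * p := fun p hp q hq =>
    Set.centralizer_centralizer_comm_of_comm (by rintro _ (rfl | rfl) _ (rfl | rfl) <;> simp)
      p (Subsemigroup.closure_le_centralizer_centralizer _ hp)
      q (Subsemigroup.closure_le_centralizer_centralizer _ hq)
  show mulW u (w' 0) v = mulW v (w' 0) u
  cases hw0 : w' 0 with
  | none => exact hcomm u hu v hv
  | some d =>
    have hd := hw' 0 d hw0
    simp only [mulW]
    rw [mul_assoc, hcomm d hd v hv, ← mul_assoc, hcomm u hu v hv, mul_assoc, hcomm u hu d hd,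
      ← mul_assoc]

-- `a`, `b`, `c` are the `λ`, `ρ`, `z` of a Mal'cev run of period `P` that never collapses.
structure MalcevCycle {M : Type*} [Mul M] (a b c : ℕ → M) (P : ℕ) : Prop where
  period_pos : 0 < P
  fst_succ : ∀ k, a (k + 1) = a k * c k * b k
  snd_succ : ∀ k, b (k + 1) = b k * c k * a k
  fst_periodic : Function.Periodic a P
  snd_periodic : Function.Periodic b P
  fst_ne_snd : ∀ k, a k ≠ b k

namespace MalcevCycle

variable {M : Type*} [Monoid M] {a b c : ℕ → M} {P : ℕ} (h : MalcevCycle a b c P)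
include h

lemma swap : MalcevCycle b a c P :=
  ⟨h.period_pos, h.snd_succ, h.fst_succ, h.snd_periodic, h.fst_periodic,
    fun k => (h.fst_ne_snd k).symm⟩

lemma shift (j : ℕ) :
    MalcevCycle (fun k => a (j + k)) (fun k => b (j + k)) (fun k => c (j + k)) P :=
  ⟨h.period_pos, fun k => h.fst_succ (j + k), fun k => h.snd_succ (j + k),
    fun k => by simp only [← add_assoc, h.fst_periodic _],
    fun k => by simp only [← add_assoc, h.snd_periodic _], fun k => h.fst_ne_snd (j + k)⟩

lemma malcevRun_eq (k : ℕ) : malcevRun (a 0) (b 0) c k = (a k, b k) := by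
  induction k with
  | zero => rfl
  | succ k ih => rw [malcevRun_succ, ih, h.fst_succ, h.snd_succ]

lemma rLe_fst_add (j n : ℕ) : RLe (a (j + n)) (a j) := by
  induction n with
  | zero => exact RLe.refl _
  | succ n ih =>
    rw [← add_assoc, h.fst_succ, mul_assoc]
    exact (rLe_mul_right _ _).trans ih

lemma rEquiv_fst (j k : ℕ) : REquiv (a j) (a k) := by
  have hle : ∀ j k, RLe (a j) (a k) := fun j k => by
    have hper : a (j + k * P) = a j := by simpa using h.fst_periodic.nat_mul k j
    have hkP : k ≤ k * P := Nat.le_mul_of_pos_right k h.period_pos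
    rw [← hper, show j + k * P = k + (j + k * P - k) by omega]
    exact h.rLe_fst_add _ _
  exact ⟨hle j k, hle k j⟩

lemma rEquiv_snd (j k : ℕ) : REquiv (b j) (b k) := h.swap.rEquiv_fst j k

lemma lLe_snd_add_two_mul (j n : ℕ) : LLe (b (j + 2 * n)) (b j) := by
  induction n with
  | zero => exact LLe.refl _
  | succ n ih =>
    have hstep : LLe (b (j + 2 * n + 2)) (b (j + 2 * n)) := by
      rw [h.snd_succ, h.fst_succ (j + 2 * n)]
      exact (lLe_mul_left _ _).trans (lLe_mul_left _ _)
    rw [show j + 2 * (n + 1) = j + 2 * n + 2 by ring]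
    exact hstep.trans ih

lemma lEquiv_fst_succ (k : ℕ) : LEquiv (a (k + 1)) (b k) := by
  refine ⟨⟨a k * c k, h.fst_succ k⟩, ?_⟩
  have hb : b k = b (k + 2 + 2 * (P - 1)) := by
    rw [← h.snd_periodic.nat_mul 2 k]
    congr 1
    have := h.period_pos
    push_cast
    omega
  rw [hb]
  exact (h.lLe_snd_add_two_mul _ _).trans ⟨b (k + 1) * c (k + 1), h.snd_succ (k + 1)⟩

lemma lEquiv_snd_succ (k : ℕ) : LEquiv (b (k + 1)) (a k) := h.swap.lEquiv_fst_succ k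

lemma jLe_fst_fst (j k : ℕ) : JLe (a j) (a k) := (h.rEquiv_fst j k).1.jLe

lemma jLe_snd_fst (j k : ℕ) : JLe (b j) (a k) :=
  (h.lEquiv_fst_succ j).2.jLe.trans (h.jLe_fst_fst (j + 1) k)

lemma jLe_fst_snd (j k : ℕ) : JLe (a j) (b k) := h.swap.jLe_snd_fst j k

lemma jLe_snd_snd (j k : ℕ) : JLe (b j) (b k) := h.swap.jLe_fst_fst j k

lemma not_hEquiv (hab : ¬ HEquiv (a 0) (b 0)) (k : ℕ) : ¬ HEquiv (a k) (b k) := by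
  have hparity : ∀ k, (LEquiv (a k) (a 0) ∧ LEquiv (b k) (b 0)) ∨
      (LEquiv (a k) (b 0) ∧ LEquiv (b k) (a 0)) := by
    intro k
    induction k with
    | zero => exact Or.inl ⟨LEquiv.refl _, LEquiv.refl _⟩
    | succ k ih =>
      rcases ih with ⟨ha, hb⟩ | ⟨ha, hb⟩
      · exact Or.inr ⟨(h.lEquiv_fst_succ k).trans hb, (h.lEquiv_snd_succ k).trans ha⟩
      · exact Or.inl ⟨(h.lEquiv_fst_succ k).trans hb, (h.lEquiv_snd_succ k).trans ha⟩
  intro hk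
  refine hab ⟨(h.rEquiv_fst 0 k).trans (hk.1.trans (h.rEquiv_snd k 0)), ?_⟩
  rcases hparity k with ⟨ha, hb⟩ | ⟨ha, hb⟩
  · exact ha.symm.trans (hk.2.trans hb)
  · exact hb.symm.trans (hk.2.symm.trans ha)

lemma not_isMN : ¬ IsMN M := by
  rintro ⟨n, -, hMN⟩
  apply h.fst_ne_snd n
  have := hMN (a 0) trivial (b 0) trivial (fun k => some (c k)) fun _ _ _ => trivial
  rwa [← malcevRun, h.malcevRun_eq] at this

lemma not_isPN_of_not_jLe (hdead : ∀ g ∈ ({a 0, b 0} : Set M), ∀ g' ∈ ({a 0, b 0} : Set M),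
    ¬ JLe (a 0) (g * g')) : ¬ IsPN M := by
  intro hPN
  set W : ℕ → Option M := fun k => some (c k)
  set A := Subsemigroup.closure ({a 0, b 0} : Set M)
  set T := Subsemigroup.closure (genSet (a 0) (b 0) W P)
  have hAT : A ≤ T := Subsemigroup.closure_mono Set.subset_union_left
  set I : Set M := {s | s ∈ T ∧ ¬ JLe (a 0) s}
  have hI : IsIdealIn T I := ⟨fun s hs => hs.1, fun s hs t ht =>
    ⟨⟨T.mul_mem ht hs.1, fun hJ => hs.2 (hJ.trans (lLe_mul_left t s).jLe)⟩,
      ⟨T.mul_mem hs.1 ht, fun hJ => hs.2 (hJ.trans (rLe_mul_right s t).jLe)⟩⟩⟩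
  have hprod : ∀ u ∈ A, ∀ v ∈ A, ¬ JLe (a 0) (u * v) := by
    intro u hu v hv hJ
    obtain ⟨g, hg, s, rfl⟩ := exists_lLe_of_mem_closure hu
    obtain ⟨g', hg', t, rfl⟩ := exists_rLe_of_mem_closure hv
    exact hdead g hg g' hg' (hJ.trans ⟨s, t, by simp only [mul_assoc]⟩)
  have hmulW : ∀ o : Option M, (∀ d, o = some d → d ∈ A) → ∀ u ∈ A, ∀ v ∈ A, mulW u o v ∈ I := by
    rintro (_ | d) ho u hu v hv
    · exact ⟨hAT (A.mul_mem hu hv), hprod u hu v hv⟩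
    · have hd := ho d rfl
      exact ⟨hAT (A.mul_mem (A.mul_mem hu hd) hv),
        fun hJ => hprod u hu d hd (hJ.trans (rLe_mul_right _ _).jLe)⟩
  have hrun : ∀ k, malcev (a 0) (b 0) W k = (a k, b k) := h.malcevRun_eq
  have hnotI : ∀ g ∈ ({a 0, b 0} : Set M), g ∉ I := by
    rintro g (rfl | rfl) hg
    exacts [hg.2 (JLe.refl _), hg.2 (h.jLe_fst_snd 0 0)]
  refine hPN (a 0) (b 0) W P I hI ?_ ?_ ⟨0, h.period_pos, ?_, ?_⟩ 0 (Nat.zero_le P)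
    ⟨1, one_pos, fun x hx y hy w hw => Or.inr ⟨hmulW _ (hw 0) x hx y hy, hmulW _ (hw 0) y hy x hx⟩⟩
  · rw [hrun, h.fst_periodic.eq]
    exact hnotI _ (Set.mem_insert _ _)
  · rw [hrun, h.snd_periodic.eq]
    exact hnotI _ (Set.mem_insert_of_mem _ rfl)
  · rw [hrun]
    exact h.fst_ne_snd 0
  · rw [hrun, hrun, h.fst_periodic.eq, h.snd_periodic.eq]

end MalcevCycle

lemma exists_malcevCycle_of_eq {M : Type*} [Monoid M] {x y : M} {w : ℕ → M} {t m : ℕ}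
    (htm : t < m) (heq : malcevRun x y w t = malcevRun x y w m)
    (hne : ∀ k < m, (malcevRun x y w k).1 ≠ (malcevRun x y w k).2) :
    ∃ (a b c : ℕ → M) (P : ℕ), MalcevCycle a b c P := by
  obtain ⟨x', y', c, hrun⟩ : ∃ x' y' c, ∀ k,
      malcevRun x' y' c k = malcevRun x y w (t + k % (m - t)) :=
    ⟨_, _, _, malcevRun_add_mod_of_eq htm heq⟩
  refine ⟨fun k => (malcevRun x' y' c k).1, fun k => (malcevRun x' y' c k).2, c, m - t,
    ⟨by omega, fun k => rfl, fun k => rfl, fun k => ?_, fun k => ?_, fun k => ?_⟩⟩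
  · simp only [hrun, Nat.add_mod_right]
  · simp only [hrun, Nat.add_mod_right]
  · rw [hrun]
    exact hne _ (by have := Nat.mod_lt k (Nat.sub_pos_of_lt htm); omega)

lemma isPN_of_isMN {M : Type*} [Monoid M] (hM : IsMN M) : IsPN M := by
  rintro x y w m I - - - ⟨t, htm, hne, heq⟩
  rw [malcev_eq_malcevRun] at hne heq
  have hne' : ∀ k < m, (malcevRun x y (fun k => (w k).getD 1) k).1 ≠
      (malcevRun x y (fun k => (w k).getD 1) k).2 := by
    intro k hk hk'
    apply hne
    rcases le_or_gt k t with hkt | hkt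
    · exact malcevRun_fst_eq_snd_of_le hkt hk'
    · rw [heq]
      exact malcevRun_fst_eq_snd_of_le hk.le hk'
  obtain ⟨a, b, c, P, h⟩ := exists_malcevCycle_of_eq htm heq hne'
  exact absurd hM h.not_isMN

lemma exists_malcevCycle_of_not_isMN {M : Type*} [Monoid M] [Finite M] (hM : ¬ IsMN M) :
    ∃ (a b c : ℕ → M) (P : ℕ), MalcevCycle a b c P := by
  classical
  let _ := Fintype.ofFinite M
  set N := Fintype.card (M × M)
  obtain ⟨x, y, w, hN⟩ :
      ∃ (x y : M) (w : ℕ → M), (malcevRun x y w N).1 ≠ (malcevRun x y w N).2 := by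
    by_contra! hall
    refine hM ⟨N, Fintype.card_pos, fun x _ y _ w _ => ?_⟩
    rw [malcev_eq_malcevRun]
    exact hall x y _
  obtain ⟨i, j, hij, heq⟩ := Fintype.exists_ne_map_eq_of_card_lt
    (fun k : Fin (N + 1) => malcevRun x y w k) (by simp [N])
  wlog hlt : i < j generalizing i j
  · exact this j i hij.symm heq.symm (lt_of_le_of_ne (not_lt.mp hlt) hij.symm)
  exact exists_malcevCycle_of_eq hlt heq fun k hk hk' =>
    hN (malcevRun_fst_eq_snd_of_le (by omega) hk')

namespace MalcevCycle

variable {M : Type*} [Monoid M] [Finite M] {a b c : ℕ → M} {P : ℕ} {e : M}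
  (h : MalcevCycle a b c P)
include h

lemma hasNoncollapsingRunFromOne_of_hEquiv_fst_snd (he : IsIdempotentElem e)
    (hae : HEquiv (a 0) e) (hab : HEquiv (a 0) (b 0)) : HasNoncollapsingRunFromOne M := by
  have hL : ∀ k, LEquiv (a k) (a 0) ∧ LEquiv (b k) (a 0) := by
    intro k
    induction k with
    | zero => exact ⟨LEquiv.refl _, hab.2.symm⟩
    | succ k ih => exact ⟨(h.lEquiv_fst_succ k).trans ih.2, (h.lEquiv_snd_succ k).trans ih.1⟩
  have ha : ∀ k, HEquiv (a k) e := fun k => ⟨(h.rEquiv_fst k 0).trans hae.1, (hL k).1.trans hae.2⟩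
  have hb : ∀ k, HEquiv (b k) e := fun k =>
    ⟨(h.rEquiv_snd k 0).trans (hab.1.symm.trans hae.1), (hL k).2.trans hae.2⟩
  have hsandwich : ∀ k x y, x * (e * c k * e) * y = x * e * c k * (e * y) := by
    intro k x y; simp only [mul_assoc]
  have hfst : ∀ k, a (k + 1) = a k * (e * c k * e) * b k := fun k => by
    rw [hsandwich, he.mul_eq_of_lLe (ha k).2.1, he.mul_eq_of_rLe (hb k).1.1, h.fst_succ]
  have hsnd : ∀ k, b (k + 1) = b k * (e * c k * e) * a k := fun k => by
    rw [hsandwich, he.mul_eq_of_lLe (hb k).2.1, he.mul_eq_of_rLe (ha k).1.1, h.snd_succ]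
  have hc : ∀ k, HEquiv (e * c k * e) e := fun k => JLe.hEquiv_self_mul_mul_self <|
    (ha (k + 1)).symm.1.1.jLe.trans (hfst k ▸ ⟨a k, b k, rfl⟩)
  let _ := hClassGroup he
  let A : ℕ → hClass he := fun k => ⟨a k, ha k⟩
  let B : ℕ → hClass he := fun k => ⟨b k, hb k⟩
  let C : ℕ → hClass he := fun k => ⟨e * c k * e, hc k⟩
  have hA : ∀ k, A (k + 1) = A k * C k * B k := fun k => Subtype.ext (hfst k)
  have hB : ∀ k, B (k + 1) = B k * C k * A k := fun k => Subtype.ext (hsnd k)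
  refine (hasNoncollapsingRunFromOne_of_commutator (fun k => (A k)⁻¹ * B k) (fun k => C k * A k)
    (fun k => ?_) (fun k hk => ?_)).of_injective _ (MulMemClass.subtype_injective (hClass he))
  · simp only [hA, hB]
    group
  · exact h.fst_ne_snd k (congrArg Subtype.val (inv_mul_eq_one.mp hk))

lemma hEquiv_snd_mul (hae : HEquiv (a 0) e)
    (hR : ∀ f, IsIdempotentElem f → REquiv f e → f = e) :
    HEquiv (b 0 * c 0) (b 1) := by
  have hR₁ : REquiv (b 0 * c 0) (b 1) :=
    ⟨(rLe_mul_right _ _).trans (h.rEquiv_snd 0 1).1, ⟨a 0, h.snd_succ 0⟩⟩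
  obtain ⟨f, hf, hfa, hfb⟩ := exists_isIdempotentElem_rEquiv_lEquiv (x := b 0 * c 0) (y := a 0)
    (by rw [← h.snd_succ]; exact hR₁.1.jLe) (by rw [← h.snd_succ]; exact h.jLe_fst_snd 0 1)
  obtain rfl := hR f hf (hfa.trans hae.1)
  exact ⟨hR₁, hfb.symm.trans (hae.2.symm.trans (h.lEquiv_snd_succ 0).symm)⟩

lemma hEquiv_mul_snd (hae : HEquiv (a 0) e)
    (hL : ∀ f, IsIdempotentElem f → LEquiv f e → f = e) :
    HEquiv (c 0 * b 0) (a 1) := by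
  have ha₁ : a 1 = a 0 * (c 0 * b 0) := by rw [h.fst_succ, mul_assoc]
  have hL₁ : LEquiv (c 0 * b 0) (a 1) :=
    ⟨(lLe_mul_left _ _).trans (h.lEquiv_fst_succ 0).2, ⟨a 0, ha₁⟩⟩
  obtain ⟨f, hf, hfb, hfa⟩ := exists_isIdempotentElem_rEquiv_lEquiv (x := a 0) (y := c 0 * b 0)
    (by rw [← ha₁]; exact h.jLe_fst_fst 0 1) (by rw [← ha₁]; exact hL₁.1.jLe)
  obtain rfl := hL f hf (hfa.trans hae.2)
  exact ⟨hfb.symm.trans (hae.1.symm.trans (h.rEquiv_fst 0 1)), hL₁⟩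

lemma hasNoncollapsingRunFromOne_of_not_hEquiv_fst_snd (hae : HEquiv (a 0) e)
    (hab : ¬ HEquiv (a 0) (b 0))
    (hR : ∀ f, IsIdempotentElem f → REquiv f e → f = e)
    (hL : ∀ f, IsIdempotentElem f → LEquiv f e → f = e) : HasNoncollapsingRunFromOne M := by
  have hrun : ∀ k, HEquiv (malcevRun (b 0) 1 c (k + 1)).1 (b (k + 1)) ∧
      HEquiv (malcevRun (b 0) 1 c (k + 1)).2 (a (k + 1)) := by
    intro k
    induction k with
    | zero =>
      simp only [zero_add, malcevRun_succ, malcevRun_zero, mul_one, one_mul]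
      exact ⟨h.hEquiv_snd_mul hae hR, h.hEquiv_mul_snd hae hL⟩
    | succ k ih =>
      rw [malcevRun_succ, h.fst_succ (k + 1), h.snd_succ (k + 1)]
      refine ⟨ih.1.mul_mul ih.2 ?_ ?_, ih.2.mul_mul ih.1 ?_ ?_⟩ <;>
        simp only [← h.fst_succ, ← h.snd_succ, h.jLe_fst_fst, h.jLe_fst_snd, h.jLe_snd_fst,
          h.jLe_snd_snd]
  refine ⟨b 0, c, fun k hk => h.not_hEquiv hab (k + 1) ?_⟩
  exact (hrun k).2.symm.trans (hk ▸ (hrun k).1)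

lemma hasNoncollapsingRunFromOne_of_hEquiv_idempotent (he : IsIdempotentElem e)
    (hae : HEquiv (a 0) e) : HasNoncollapsingRunFromOne M := by
  by_cases hab : HEquiv (a 0) (b 0)
  · exact h.hasNoncollapsingRunFromOne_of_hEquiv_fst_snd he hae hab
  by_cases hR : ∀ f, IsIdempotentElem f → REquiv f e → f = e
  · by_cases hL : ∀ f, IsIdempotentElem f → LEquiv f e → f = e
    · exact h.hasNoncollapsingRunFromOne_of_not_hEquiv_fst_snd hae hab hR hL
    push Not at hL
    obtain ⟨f, hf, hfe, hne⟩ := hL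
    exact hasNoncollapsingRunFromOne_of_mul_eq hne
      (Or.inl ⟨he.mul_eq_of_lLe hfe.1, hf.mul_eq_of_lLe hfe.2⟩)
  push Not at hR
  obtain ⟨f, hf, hfe, hne⟩ := hR
  exact hasNoncollapsingRunFromOne_of_mul_eq hne
    (Or.inr ⟨hf.mul_eq_of_rLe hfe.2, he.mul_eq_of_rLe hfe.1⟩)

lemma exists_hEquiv_isIdempotentElem (halive : ∃ g ∈ ({a 0, b 0} : Set M),
    ∃ g' ∈ ({a 0, b 0} : Set M), JLe (a 0) (g * g')) :
    ∃ j e, IsIdempotentElem e ∧ (HEquiv (a j) e ∨ HEquiv (b j) e) := by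
  obtain ⟨g, hg, g', hg', hJ⟩ := halive
  have hJle : ∀ x ∈ ({a 0, b 0} : Set M), JLe x (g * g') := by
    rintro _ (rfl | rfl)
    exacts [hJ, (h.jLe_snd_fst 0 0).trans hJ]
  obtain ⟨e, he, heR, heL⟩ := exists_isIdempotentElem_rEquiv_lEquiv (hJle g hg) (hJle g' hg')
  rcases hg with rfl | rfl <;> rcases hg' with rfl | rfl
  · exact ⟨0, e, he, Or.inl ⟨heR.symm, heL.symm⟩⟩
  · exact ⟨1, e, he, Or.inr ⟨(h.rEquiv_snd 1 0).trans heR.symm,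
      (h.lEquiv_snd_succ 0).trans heL.symm⟩⟩
  · exact ⟨1, e, he, Or.inl ⟨(h.rEquiv_fst 1 0).trans heR.symm,
      (h.lEquiv_fst_succ 0).trans heL.symm⟩⟩
  · exact ⟨0, e, he, Or.inr ⟨heR.symm, heL.symm⟩⟩

lemma hasNoncollapsingRunFromOne_of_jLe (halive : ∃ g ∈ ({a 0, b 0} : Set M),
    ∃ g' ∈ ({a 0, b 0} : Set M), JLe (a 0) (g * g')) : HasNoncollapsingRunFromOne M := by
  obtain ⟨j, e, he, hae | hbe⟩ := h.exists_hEquiv_isIdempotentElem halive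
  · exact (h.shift j).hasNoncollapsingRunFromOne_of_hEquiv_idempotent he hae
  · exact (h.swap.shift j).hasNoncollapsingRunFromOne_of_hEquiv_idempotent he hbe

lemma not_isPN : ¬ IsPN M := by
  by_cases hdead : ∀ g ∈ ({a 0, b 0} : Set M), ∀ g' ∈ ({a 0, b 0} : Set M), ¬ JLe (a 0) (g * g')
  · exact h.not_isPN_of_not_jLe hdead
  push Not at hdead
  exact (h.hasNoncollapsingRunFromOne_of_jLe hdead).not_isPN

end MalcevCycle

/-- A finite monoid is pseudo-nilpotent iff it is Mal'cev nilpotent. -/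
theorem stmt4 {M : Type*} [Monoid M] [Finite M] :
    IsPN M ↔ IsMN M := by
  refine ⟨fun hPN => ?_, isPN_of_isMN⟩
  by_contra hMN
  obtain ⟨a, b, c, P, h⟩ := exists_malcevCycle_of_not_isMN hMN
  exact h.not_isPN hPN
end

section
/- A completely simple finite semigroup S has a complete upper non-nilpotent graph (every two distinct elements generate a non-nilpotent subsemigroup) if and only if S is a completely simple semigroup that is a band, i.e., isomorphic to a rectangular band M({e}, I, Λ; P) over the trivial group; in particular, in such a semigroup a = λ_2(a, b, 1, 1) and b = ρ_2(a, b, 1, 1) for all a, b. -/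
/-- A completely simple semigroup: it is simple (the only nonempty ideal is `S`)
and it possesses a primitive idempotent. -/
def IsCompletelySimple (S : Type*) [Semigroup S] : Prop :=
  (∀ I : Set S, I.Nonempty → IsIdealIn Set.univ I → I = Set.univ) ∧
  ∃ e : S, e * e = e ∧ ∀ f : S, f * f = f → e * f = f → f * e = f → f = e

/-! Both directions rest on the observation that a subsemigroup generated by two commuting
elements is commutative, hence Mal'cev nilpotent already at `n = 1`. If every pair of distinct
elements generates a non-nilpotent subsemigroup, then commuting elements are equal; since `a`
commutes with `a * a`, and in a band also with `a * b * a`, the semigroup is a rectangular band.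
Conversely, in a rectangular band `x * y * (y * x) = x`, so the Mal'cev sequences with trivial
parameters alternate between `(a, b)` and `(a * b, b * a)`, and `a * b = b * a` forces `a = b`. -/

section Commutative

variable {S : Type*} [Semigroup S]

lemma setMN_of_mul_comm (T : Subsemigroup S) (h : ∀ x ∈ T, ∀ y ∈ T, x * y = y * x) :
    SetMN (T : Set S) := by
  refine ⟨1, Nat.one_pos, fun x hx y hy w hw => ?_⟩
  show mulW x (w 0) y = mulW y (w 0) x
  cases hw0 : w 0 with
  | none => exact h x hx y hy
  | some c =>
    have hc : c ∈ T := hw 0 c hw0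
    show x * c * y = y * c * x
    rw [h _ (mul_mem hx hc) y hy, ← mul_assoc, mul_assoc y, h x hx c hc, mul_assoc]

lemma setMN_closure_pair_of_commute {a b : S} (h : Commute a b) :
    SetMN (Subsemigroup.closure ({a, b} : Set S) : Set S) := by
  have hgen : ∀ x ∈ ({a, b} : Set S), ∀ y ∈ ({a, b} : Set S), x * y = y * x := by
    rintro x (rfl | rfl) y (rfl | rfl)
    exacts [rfl, h, h.symm, rfl]
  refine setMN_of_mul_comm _ fun x hx y hy => ?_
  have hle := Subsemigroup.closure_le_centralizer_centralizer ({a, b} : Set S)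
  exact Set.centralizer_centralizer_comm_of_comm hgen x (hle hx) y (hle hy)

variable (H : ∀ a b : S, a ≠ b → ¬ SetMN (Subsemigroup.closure ({a, b} : Set S) : Set S))
include H

lemma eq_of_commute_of_forall_not_setMN {a b : S} (h : Commute a b) : a = b :=
  by_contra fun hne => H a b hne (setMN_closure_pair_of_commute h)

lemma mul_self_eq_of_forall_not_setMN (a : S) : a * a = a :=
  (eq_of_commute_of_forall_not_setMN H ((Commute.refl a).mul_right (Commute.refl a))).symm

lemma mul_mul_self_eq_of_forall_not_setMN (a b : S) : a * b * a = a := by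
  have hidem := mul_self_eq_of_forall_not_setMN H
  have hcomm : Commute a (a * b * a) := by
    show a * (a * b * a) = a * b * a * a
    rw [← mul_assoc, ← mul_assoc, hidem, mul_assoc _ a a, hidem]
  exact (eq_of_commute_of_forall_not_setMN H hcomm).symm

end Commutative

section RectangularBand

lemma malcev_none_succ {S : Type*} [Semigroup S] (x y : S) (n : ℕ) :
    malcev x y (fun _ => none) (n + 1) =
      ((malcev x y (fun _ => none) n).1 * (malcev x y (fun _ => none) n).2,
        (malcev x y (fun _ => none) n).2 * (malcev x y (fun _ => none) n).1) :=
  rfl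

variable {S : Type*} [Semigroup S]
  (hidem : ∀ a : S, a * a = a) (hrect : ∀ a b : S, a * b * a = a)
include hidem hrect

lemma mul_mul_mul_swap_eq_of_rectangular (a b : S) : a * b * (b * a) = a := by
  rw [mul_assoc a b, ← mul_assoc b b, hidem b, ← mul_assoc, hrect]

lemma eq_of_mul_comm_of_rectangular {a b : S} (h : a * b = b * a) : a = b :=
  calc a = b * a * a := by rw [← h, hrect]
    _ = b * a := by rw [mul_assoc, hidem]
    _ = a * b * b := by rw [← h, mul_assoc, hidem]
    _ = b := by rw [h, hrect]

lemma malcev_none_two_of_rectangular (a b : S) : malcev a b (fun _ => none) 2 = (a, b) := by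
  show (a * b * (b * a), b * a * (a * b)) = (a, b)
  rw [mul_mul_mul_swap_eq_of_rectangular hidem hrect,
    mul_mul_mul_swap_eq_of_rectangular hidem hrect]

lemma malcev_none_of_rectangular (a b : S) (n : ℕ) :
    malcev a b (fun _ => none) n = (a, b) ∨ malcev a b (fun _ => none) n = (a * b, b * a) := by
  induction n with
  | zero => exact Or.inl rfl
  | succ n ih =>
    rw [malcev_none_succ]
    rcases ih with h | h <;> rw [h]
    · exact Or.inr rfl
    · exact Or.inl (by rw [mul_mul_mul_swap_eq_of_rectangular hidem hrect,
        mul_mul_mul_swap_eq_of_rectangular hidem hrect])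

lemma not_setMN_closure_pair_of_rectangular {a b : S} (hab : a ≠ b) :
    ¬ SetMN (Subsemigroup.closure ({a, b} : Set S) : Set S) := by
  rintro ⟨n, -, hall⟩
  have hmem : ∀ z ∈ ({a, b} : Set S), z ∈ Subsemigroup.closure ({a, b} : Set S) :=
    fun z hz => Subsemigroup.subset_closure hz
  have heq := hall a (hmem a (by simp)) b (hmem b (by simp)) (fun _ => none) (by simp)
  rcases malcev_none_of_rectangular hidem hrect a b n with h | h <;> rw [h] at heq
  · exact hab heq
  · exact hab (eq_of_mul_comm_of_rectangular hidem hrect heq)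

end RectangularBand

theorem stmt7_general {S : Type*} [Semigroup S] :
    ((∀ a b : S, a ≠ b → ¬ SetMN (Subsemigroup.closure ({a, b} : Set S) : Set S)) ↔
      ((∀ a : S, a * a = a) ∧ ∀ a b : S, a * b * a = a)) ∧
    (((∀ a : S, a * a = a) ∧ ∀ a b : S, a * b * a = a) →
      ∀ a b : S, malcev a b (fun _ => none) 2 = (a, b)) :=
  ⟨⟨fun H => ⟨mul_self_eq_of_forall_not_setMN H, mul_mul_self_eq_of_forall_not_setMN H⟩,
    fun ⟨hidem, hrect⟩ _ _ => not_setMN_closure_pair_of_rectangular hidem hrect⟩,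
    fun ⟨hidem, hrect⟩ => malcev_none_two_of_rectangular hidem hrect⟩

/-- A finite completely simple semigroup has a complete upper non-nilpotent graph
iff it is a rectangular band (i.e. a completely simple semigroup `M({e}, I, Λ; P)`
over the trivial group, which is exactly a band satisfying `a b a = a`); in this
case `a = λ_2(a, b, 1, 1)` and `b = ρ_2(a, b, 1, 1)` for all `a, b`. -/
theorem stmt7 {S : Type*} [Semigroup S] [Finite S] (hCS : IsCompletelySimple S) :
    ((∀ a b : S, a ≠ b → ¬ SetMN (Subsemigroup.closure ({a, b} : Set S) : Set S)) ↔
      ((∀ a : S, a * a = a) ∧ ∀ a b : S, a * b * a = a)) ∧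
    (((∀ a : S, a * a = a) ∧ ∀ a b : S, a * b * a = a) →
      ∀ a b : S, malcev a b (fun _ => none) 2 = (a, b)) :=
  stmt7_general
end

section
/- Let M^0(G, I, Λ; P) be a finite completely 0-simple semigroup over a nilpotent group G in which all entries of the sandwich matrix P are non-zero. If |I| + |Λ| > 2 and (i, λ) ≠ (i', λ'), then the subsemigroup generated by (g; i, λ) and (g'; i', λ') is not Mal'cev nilpotent for all g, g' ∈ G. Consequently, the upper non-nilpotent graph of M^0(G, I, Λ; P) \ {θ} is connected and regular. -/
/-- Carrier of the Rees matrix semigroup with zero `M⁰(G, I, Λ; P)`: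
`none` is the zero `θ`, `some (g, i, λ)` is the element `(g; i, λ)`. -/
def ReesM0 (G I L : Type*) (_P : L → I → Option G) : Type _ := Option (G × I × L)

/-- Multiplication of `M⁰(G, I, Λ; P)`. -/
def rmMul {G I L : Type*} [Group G] (P : L → I → Option G) :
    Option (G × I × L) → Option (G × I × L) → Option (G × I × L)
  | some (g, i, l), some (h, j, m) => (P l j).elim none fun p => some (g * p * h, i, m)
  | _, _ => none

theorem rmMul_assoc {G I L : Type*} [Group G] (P : L → I → Option G) :
    ∀ a b c : Option (G × I × L), rmMul P (rmMul P a b) c = rmMul P a (rmMul P b c) := by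
  rintro (_ | ⟨g, i, l⟩) (_ | ⟨h, j, m⟩) (_ | ⟨k, s, t⟩) <;>
    simp only [rmMul] <;>
    try rfl
  · rcases hp : P l j with _ | p <;> simp [rmMul, hp]
  · rcases hp : P l j with _ | p <;> rcases hq : P m s with _ | q <;>
      simp [rmMul, hp, hq, mul_assoc]

instance ReesM0.semigroup {G I L : Type*} [Group G] {P : L → I → Option G} :
    Semigroup (ReesM0 G I L P) where
  mul := rmMul P
  mul_assoc := rmMul_assoc P

/-- The nonzero element `(g; i, λ)` of `M⁰(G, I, Λ; P)`. -/
def ReesM0.elem {G I L : Type*} {P : L → I → Option G} (g : G) (i : I) (l : L) :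
    ReesM0 G I L P := some (g, i, l)

/-- The zero `θ` of `M⁰(G, I, Λ; P)`. -/
def ReesM0.theta {G I L : Type*} {P : L → I → Option G} : ReesM0 G I L P := none

/-- The upper non-nilpotent graph of a semigroup. -/
def nnGraph (S : Type*) [Semigroup S] : SimpleGraph S where
  Adj a b := NEdge a b
  symm := by
    constructor
    rintro a b ⟨h1, h2⟩
    exact ⟨h1.symm, by rwa [Set.pair_comm b a]⟩
  loopless := by constructor; rintro a ⟨h1, _⟩; exact h1 rfl

/-!
In a nilpotent group `G` the Mal'cev sequences satisfy `λₙ⁻¹ ρₙ ∈ γₙ₊₁(G)` (each step turns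
`λₙ⁻¹ ρₙ` into a commutator of it with an element of `G`), so they meet after finitely many steps.
A cell `{(g; i, λ) | g ∈ G}` with `p_{λi} ≠ θ` is a homomorphic image of `G` under
`h ↦ (h p_{λi}⁻¹; i, λ)`, so two elements of one cell generate a Mal'cev nilpotent subsemigroup.
For `(g; i, λ)` and `(g'; i', λ')` in distinct cells and trivial parameters, `λₙ` stays in row `i`
and `ρₙ` in row `i'` while their columns swap at every step, so `λₙ ≠ ρₙ` for all `n`.
Hence the graph on the nonzero elements is complete multipartite with the `|I||Λ|` cells of size
`|G|` as parts: connected once there are two cells, and regular of degree `|G|(|I||Λ| - 1)`.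
-/

section Malcev

variable {S T : Type*} [Semigroup S] [Semigroup T]

lemma MulHom.map_mulW (f : T →ₙ* S) (a : T) (w : Option T) (b : T) :
    f (mulW a w b) = mulW (f a) (w.map f) (f b) := by
  cases w <;> simp [mulW]

lemma MulHom.map_malcev (f : T →ₙ* S) (x y : T) (w : ℕ → Option T) (n : ℕ) :
    Prod.map f f (malcev x y w n) = malcev (f x) (f y) (fun k => (w k).map f) n := by
  induction n with
  | zero => rfl
  | succ n ih =>
    rw [malcev, malcev, ← ih]
    simp only [Prod.map_fst, Prod.map_snd, Prod.map_apply, f.map_mulW]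

lemma SetMN.of_subset_range (f : T →ₙ* S) (hT : IsMN T) {A : Set S}
    (hA : A ⊆ Set.range f) : SetMN A := by
  obtain ⟨n, hn, hmal⟩ := hT
  refine ⟨n, hn, fun x hx y hy w hw => ?_⟩
  obtain ⟨x, rfl⟩ := hA hx
  obtain ⟨y, rfl⟩ := hA hy
  have hlift : ∀ k, ∃ v : Option T, v.map f = w k := by
    intro k
    rcases hk : w k with _ | c
    · exact ⟨none, rfl⟩
    · obtain ⟨c, rfl⟩ := hA (hw k c hk)
      exact ⟨some c, rfl⟩
  choose v hv using hlift
  have hw : w = fun k => (v k).map f := funext fun k => (hv k).symm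
  rw [hw, ← f.map_malcev]
  exact congrArg f (hmal x trivial y trivial v fun _ _ _ => trivial)

end Malcev

section NilpotentGroup

variable {G : Type*} [Group G]

open scoped commutatorElement in
lemma malcev_inv_mul_mem_lowerCentralSeries (x y : G) (w : ℕ → Option G) (n : ℕ) :
    (malcev x y w n).1⁻¹ * (malcev x y w n).2 ∈ (⊤ : Subgroup G).lowerCentralSeries n := by
  induction n with
  | zero => exact Subgroup.mem_top _
  | succ n ih =>
    set a := (malcev x y w n).1
    set b := (malcev x y w n).2
    have hcomm : ∀ u : G, ⁅(a⁻¹ * b)⁻¹, u⁆ ∈ (⊤ : Subgroup G).lowerCentralSeries (n + 1) :=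
      fun u => Subgroup.commutator_mem_commutator (inv_mem ih) (Subgroup.mem_top u)
    change (mulW a (w n) b)⁻¹ * mulW b (w n) a ∈ _
    cases w n with
    | none =>
      have h : (a * b)⁻¹ * (b * a) = ⁅(a⁻¹ * b)⁻¹, a⁻¹⁆ := by group
      simpa only [mulW, h] using hcomm a⁻¹
    | some c =>
      have h : (a * c * b)⁻¹ * (b * c * a) = ⁅(a⁻¹ * b)⁻¹, (c * a)⁻¹⁆ := by group
      simpa only [mulW, h] using hcomm (c * a)⁻¹

theorem Group.IsNilpotent.isMN (hG : Group.IsNilpotent G) : IsMN G := by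
  obtain ⟨N, hN⟩ := Subgroup.nilpotent_iff_lowerCentralSeries.mp hG
  refine ⟨N + 1, N.succ_pos, fun x _ y _ w _ => ?_⟩
  have h := Subgroup.lowerCentralSeries_antitone ⊤ N.le_succ
    (malcev_inv_mul_mem_lowerCentralSeries x y w (N + 1))
  rw [hN, Subgroup.mem_bot] at h
  exact inv_mul_eq_one.mp h

end NilpotentGroup

namespace ReesM0

variable {G I L : Type*} {P : L → I → Option G}

lemma elem_eq_elem_iff {g h : G} {i j : I} {l m : L} :
    elem (P := P) g i l = elem h j m ↔ g = h ∧ i = j ∧ l = m :=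
  Option.some_inj.trans (by simp)

def nonzeroEquiv : {x : ReesM0 G I L P | x ≠ theta} ≃ G × I × L :=
  (Equiv.subtypeEquivRight fun _ => Option.ne_none_iff_isSome).trans (Equiv.optionIsSomeEquiv _)

variable [Group G]

lemma elem_mul_elem {g h p : G} {i j : I} {l m : L} (hp : P l j = some p) :
    elem (P := P) g i l * elem h j m = elem (g * p * h) i m := by
  change rmMul P _ _ = _
  simp [rmMul, hp, elem]

lemma exists_elem_mul_elem (hP : ∀ l i, P l i ≠ none) (g h : G) (i j : I) (l m : L) :
    ∃ k, elem (P := P) g i l * elem h j m = elem k i m := by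
  obtain ⟨p, hp⟩ := Option.ne_none_iff_exists'.mp (hP l j)
  exact ⟨_, elem_mul_elem hp⟩

def cellHom (i : I) (l : L) {p : G} (hp : P l i = some p) : G →ₙ* ReesM0 G I L P where
  toFun h := elem (h * p⁻¹) i l
  map_mul' a b := by simp [elem_mul_elem hp, mul_assoc]

lemma setMN_closure_pair_of_same_cell (hG : Group.IsNilpotent G) {i : I} {l : L}
    (hp : P l i ≠ none) (g g' : G) :
    SetMN (Subsemigroup.closure {elem (P := P) g i l, elem g' i l} : Set (ReesM0 G I L P)) := by
  obtain ⟨p, hp⟩ := Option.ne_none_iff_exists'.mp hp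
  refine SetMN.of_subset_range (cellHom i l hp) hG.isMN ?_
  rw [← MulHom.coe_srange, SetLike.coe_subset_coe, Subsemigroup.closure_le]
  rintro _ (rfl | rfl)
  exacts [⟨g * p, by simp [cellHom]⟩, ⟨g' * p, by simp [cellHom]⟩]

lemma malcev_elem_elem (hP : ∀ l i, P l i ≠ none) (g g' : G) (i i' : I) (l l' : L) (n : ℕ) :
    ∃ h h' : G,
      malcev (elem (P := P) g i l) (elem g' i' l') (fun _ => none) n
        = (elem h i l, elem h' i' l') ∨
      malcev (elem (P := P) g i l) (elem g' i' l') (fun _ => none) n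
        = (elem h i l', elem h' i' l) := by
  induction n with
  | zero => exact ⟨g, g', Or.inl rfl⟩
  | succ n ih =>
    obtain ⟨h, h', hn | hn⟩ := ih <;> rw [malcev, hn] <;> simp only [mulW]
    · obtain ⟨k, hk⟩ := exists_elem_mul_elem hP h h' i i' l l'
      obtain ⟨k', hk'⟩ := exists_elem_mul_elem hP h' h i' i l' l
      exact ⟨k, k', Or.inr (by rw [hk, hk'])⟩
    · obtain ⟨k, hk⟩ := exists_elem_mul_elem hP h h' i i' l' l
      obtain ⟨k', hk'⟩ := exists_elem_mul_elem hP h' h i' i l l'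
      exact ⟨k, k', Or.inl (by rw [hk, hk'])⟩

lemma not_setMN_of_mem (hP : ∀ l i, P l i ≠ none) {g g' : G} {i i' : I} {l l' : L}
    (hne : (i, l) ≠ (i', l')) {A : Set (ReesM0 G I L P)}
    (ha : elem g i l ∈ A) (hb : elem g' i' l' ∈ A) : ¬ SetMN A := by
  rintro ⟨n, -, hmal⟩
  have heq := hmal _ ha _ hb (fun _ => none) (by simp)
  obtain ⟨h, h', hn | hn⟩ := malcev_elem_elem hP g g' i i' l l' n <;>
    rw [hn, elem_eq_elem_iff] at heq
  · exact hne (Prod.ext heq.2.1 heq.2.2)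
  · exact hne (Prod.ext heq.2.1 heq.2.2.symm)

lemma nEdge_elem_elem_iff (hG : Group.IsNilpotent G) (hP : ∀ l i, P l i ≠ none)
    (g g' : G) (i i' : I) (l l' : L) :
    NEdge (elem (P := P) g i l) (elem g' i' l') ↔ (i, l) ≠ (i', l') := by
  refine ⟨?_, fun hne => ⟨?_, not_setMN_of_mem hP hne
    (Subsemigroup.subset_closure (Or.inl rfl)) (Subsemigroup.subset_closure (Or.inr rfl))⟩⟩
  · rintro ⟨-, hnil⟩ hcell
    obtain ⟨rfl, rfl⟩ := Prod.ext_iff.mp hcell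
    exact hnil (setMN_closure_pair_of_same_cell hG (hP l i) g g')
  · rw [Ne, elem_eq_elem_iff]
    exact fun h => hne (Prod.ext h.2.1 h.2.2)

lemma induce_nonzero_adj_iff (hG : Group.IsNilpotent G) (hP : ∀ l i, P l i ≠ none)
    (u v : {x : ReesM0 G I L P | x ≠ theta}) :
    ((nnGraph (ReesM0 G I L P)).induce {x | x ≠ theta}).Adj u v ↔
      (nonzeroEquiv u).2 ≠ (nonzeroEquiv v).2 := by
  rw [← nonzeroEquiv.symm_apply_apply u, ← nonzeroEquiv.symm_apply_apply v]
  generalize nonzeroEquiv u = t, nonzeroEquiv v = s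
  simp only [Equiv.apply_symm_apply, SimpleGraph.comap_adj, Function.Embedding.coe_subtype]
  exact nEdge_elem_elem_iff hG hP _ _ _ _ _ _

end ReesM0

lemma SimpleGraph.connected_of_adj_iff_ne {W C : Type*} [Nonempty W] [Nontrivial C]
    (H : SimpleGraph W) (f : W → C) (hf : Function.Surjective f)
    (hadj : ∀ u v, H.Adj u v ↔ f u ≠ f v) : H.Connected := by
  refine ⟨fun u v => ?_⟩
  by_cases huv : f u = f v
  · obtain ⟨c, hc⟩ := exists_ne (f u)
    obtain ⟨x, rfl⟩ := hf c
    exact ((hadj u x).2 hc.symm).reachable.trans ((hadj x v).2 (huv ▸ hc)).reachable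
  · exact ((hadj u v).2 huv).reachable

lemma Set.ncard_setOf_snd_ne {W α C : Type*} (e : W ≃ α × C) (c : C) :
    {u | (e u).2 ≠ c}.ncard = Nat.card α * (Nat.card C - 1) := by
  have h : {u | (e u).2 ≠ c} = e ⁻¹' (univ ×ˢ (univ \ {c})) := by ext; simp
  rw [h, Set.ncard_preimage_of_injective_subset_range e.injective (by simp), Set.ncard_prod,
    Set.ncard_sdiff_singleton_of_mem (mem_univ c), Set.ncard_univ, Set.ncard_univ]

lemma nontrivial_prod_of_two_lt_card_add {I L : Type*} [Nonempty I] [Nonempty L]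
    (h : 2 < Nat.card I + Nat.card L) : Nontrivial (I × L) := by
  by_contra hIL
  rw [not_nontrivial_iff_subsingleton] at hIL
  obtain ⟨i⟩ := ‹Nonempty I›
  obtain ⟨l⟩ := ‹Nonempty L›
  have hcard := Nat.card_of_subsingleton (i, l)
  rw [Nat.card_prod, mul_eq_one] at hcard
  omega

theorem stmt8_general {G I L : Type*} [Group G]
    [Nonempty I] [Nonempty L]
    (P : L → I → Option G) (hG : Group.IsNilpotent G)
    (hP : ∀ l i, P l i ≠ none) (hcard : 2 < Nat.card I + Nat.card L) :
    (∀ (g g' : G) (i i' : I) (l l' : L), (i, l) ≠ (i', l') →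
      ¬ SetMN (Subsemigroup.closure
          ({ReesM0.elem (P := P) g i l, ReesM0.elem (P := P) g' i' l'} :
            Set (ReesM0 G I L P)) : Set (ReesM0 G I L P))) ∧
    ((nnGraph (ReesM0 G I L P)).induce
        {x : ReesM0 G I L P | x ≠ ReesM0.theta}).Connected ∧
    (∃ d : ℕ, ∀ v : {x : ReesM0 G I L P // x ≠ ReesM0.theta},
      {u | ((nnGraph (ReesM0 G I L P)).induce
          {x : ReesM0 G I L P | x ≠ ReesM0.theta}).Adj v u}.ncard = d) := by
  have := nontrivial_prod_of_two_lt_card_add hcard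
  have hadj := ReesM0.induce_nonzero_adj_iff hG hP
  refine ⟨fun g g' i i' l l' hne => ReesM0.not_setMN_of_mem hP hne
    (Subsemigroup.subset_closure (Or.inl rfl)) (Subsemigroup.subset_closure (Or.inr rfl)), ?_,
    Nat.card G * (Nat.card (I × L) - 1), fun v => ?_⟩
  · have : Nonempty {x : ReesM0 G I L P | x ≠ ReesM0.theta} := ReesM0.nonzeroEquiv.nonempty
    exact SimpleGraph.connected_of_adj_iff_ne _ _
      (Prod.snd_surjective.comp ReesM0.nonzeroEquiv.surjective) hadj
  · simp only [hadj, ne_comm (a := (ReesM0.nonzeroEquiv v).2)]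
    exact Set.ncard_setOf_snd_ne ReesM0.nonzeroEquiv _

/-- In a finite completely 0-simple semigroup `M⁰(G, I, Λ; P)` over a nilpotent
group `G` with all sandwich entries non-zero and `|I| + |Λ| > 2`, any two nonzero
elements in distinct cells generate a non-nilpotent subsemigroup; consequently the
upper non-nilpotent graph of `M⁰(G, I, Λ; P) \ {θ}` is connected and regular. -/
theorem stmt8 {G I L : Type*} [Group G] [Finite G] [Finite I] [Finite L]
    [Nonempty I] [Nonempty L]
    (P : L → I → Option G) (hG : Group.IsNilpotent G)
    (hP : ∀ l i, P l i ≠ none) (hcard : 2 < Nat.card I + Nat.card L) :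
    (∀ (g g' : G) (i i' : I) (l l' : L), (i, l) ≠ (i', l') →
      ¬ SetMN (Subsemigroup.closure
          ({ReesM0.elem (P := P) g i l, ReesM0.elem (P := P) g' i' l'} :
            Set (ReesM0 G I L P)) : Set (ReesM0 G I L P))) ∧
    ((nnGraph (ReesM0 G I L P)).induce
        {x : ReesM0 G I L P | x ≠ ReesM0.theta}).Connected ∧
    (∃ d : ℕ, ∀ v : {x : ReesM0 G I L P // x ≠ ReesM0.theta},
      {u | ((nnGraph (ReesM0 G I L P)).induce
          {x : ReesM0 G I L P | x ≠ ReesM0.theta}).Adj v u}.ncard = d) :=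
  stmt8_general P hG hP hcard
end

section
/- Let S be a finite semigroup with zero θ and let J be an ideal of S with J ≅ M^0(G, I, Λ; P) a regular Rees matrix semigroup all of whose sandwich matrix entries are non-zero. Then F_J = {s ∈ S \ J : sj ≠ θ, js ≠ θ and j's j ≠ θ for all j, j' ∈ J \ {θ}}, the set F_J ∪ (J \ {θ}) is a subsemigroup of S, and F'_J = S \ (F_J ∪ (J \ {θ})) is an ideal of S. -/
/-- For a semigroup `S` with zero and an ideal `J` of `S`:
`F_J = {s ∈ S \ J : sj ≠ θ or js ≠ θ for some j ∈ J}`. -/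
def Fset {S : Type*} [SemigroupWithZero S] (J : Set S) : Set S :=
  {s | s ∉ J ∧ ∃ j ∈ J, s * j ≠ 0 ∨ j * s ≠ 0}

theorem ReesM0.mul_ne_none {G I L : Type*} [Group G] {P : L → I → Option G}
    (hP : ∀ l i, P l i ≠ none) {a b : ReesM0 G I L P}
    (ha : a ≠ (none : Option (G × I × L))) (hb : b ≠ (none : Option (G × I × L))) :
    a * b ≠ (none : Option (G × I × L)) := by
  obtain ⟨⟨g, i, l⟩, rfl⟩ := Option.ne_none_iff_exists'.mp ha
  obtain ⟨⟨h, j, m⟩, rfl⟩ := Option.ne_none_iff_exists'.mp hb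
  obtain ⟨p, hp⟩ := Option.ne_none_iff_exists'.mp (hP l j)
  change rmMul P _ _ ≠ none
  simp [rmMul, hp]

section ZeroDivisors

variable {S : Type*} [SemigroupWithZero S] {J : Set S}

theorem IsIdealIn.mul_mem_left (hJ : IsIdealIn Set.univ J) (t : S) {a : S} (ha : a ∈ J) :
    t * a ∈ J :=
  (hJ.2 a ha t trivial).1

theorem IsIdealIn.mul_mem_right (hJ : IsIdealIn Set.univ J) {a : S} (ha : a ∈ J) (t : S) :
    a * t ∈ J :=
  (hJ.2 a ha t trivial).2

def NoZeroDivisorsOn (J : Set S) : Prop :=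
  ∀ a ∈ J, a ≠ 0 → ∀ b ∈ J, b ≠ 0 → a * b ≠ 0

theorem noZeroDivisorsOn_of_reesM0 {G I L : Type*} [Group G] {P : L → I → Option G}
    (hP : ∀ l i, P l i ≠ none) (h0 : (0 : S) ∈ J) (φ : S → ReesM0 G I L P)
    (hom : ∀ a ∈ J, ∀ b ∈ J, φ (a * b) = φ a * φ b)
    (hinj : ∀ a ∈ J, ∀ b ∈ J, φ a = φ b → a = b)
    (hz : φ 0 = (none : Option (G × I × L))) :
    NoZeroDivisorsOn J := by
  have hφ : ∀ a ∈ J, a ≠ 0 → φ a ≠ (none : Option (G × I × L)) := fun a ha ha0 h =>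
    ha0 (hinj a ha 0 h0 (h.trans hz.symm))
  intro a ha ha0 b hb hb0 hab
  refine ReesM0.mul_ne_none hP (hφ a ha ha0) (hφ b hb hb0) ?_
  rw [← hom a ha b hb, hab, hz]

def annihilator (J : Set S) : Set S :=
  {a | ∀ j ∈ J, a * j = 0 ∧ j * a = 0}

theorem isIdealIn_annihilator (hJ : IsIdealIn Set.univ J) :
    IsIdealIn Set.univ (annihilator J) := by
  refine ⟨Set.subset_univ _, fun a ha t _ => ⟨fun j hj => ⟨?_, ?_⟩, fun j hj => ⟨?_, ?_⟩⟩⟩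
  · rw [mul_assoc, (ha j hj).1, mul_zero]
  · rw [← mul_assoc, (ha _ (hJ.mul_mem_right hj t)).2]
  · rw [mul_assoc, (ha _ (hJ.mul_mem_left t hj)).1]
  · rw [← mul_assoc, (ha j hj).2, zero_mul]

theorem mul_ne_zero_of_notMem_annihilator (hJ : IsIdealIn Set.univ J)
    (hJ0 : NoZeroDivisorsOn J) {s : S} (hs : s ∉ annihilator J)
    {j₁ : S} (hj₁ : j₁ ∈ J) (hj₁0 : j₁ ≠ 0) : s * j₁ ≠ 0 ∧ j₁ * s ≠ 0 := by
  have left_of_right : ∀ j ∈ J, s * j ≠ 0 → j₁ * s ≠ 0 := fun j hj hsj h =>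
    hJ0 j₁ hj₁ hj₁0 _ (hJ.mul_mem_left s hj) hsj (by rw [← mul_assoc, h, zero_mul])
  have right_of_left : ∀ j ∈ J, j * s ≠ 0 → s * j₁ ≠ 0 := fun j hj hjs h =>
    hJ0 _ (hJ.mul_mem_right hj s) hjs j₁ hj₁ hj₁0 (by rw [mul_assoc, h, mul_zero])
  simp only [annihilator, Set.mem_ofPred_eq, not_forall, Classical.not_and_iff_not_or_not] at hs
  obtain ⟨j, hj, hsj | hjs⟩ := hs
  · exact ⟨right_of_left j₁ hj₁ (left_of_right j hj hsj), left_of_right j hj hsj⟩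
  · exact ⟨right_of_left j hj hjs, left_of_right j₁ hj₁ (right_of_left j hj hjs)⟩

theorem Fset_union_eq_compl_annihilator (hJ0 : NoZeroDivisorsOn J) :
    Fset J ∪ (J \ {0}) = (annihilator J)ᶜ := by
  ext s
  simp only [Fset, annihilator, Set.mem_union, Set.mem_sdiff, Set.mem_singleton_iff,
    Set.mem_ofPred_eq, Set.mem_compl_iff, not_forall, Classical.not_and_iff_not_or_not]
  constructor
  · rintro (⟨-, hs⟩ | ⟨hsJ, hs0⟩)
    · simpa only [exists_prop] using hs
    · exact ⟨s, hsJ, Or.inl (hJ0 s hsJ hs0 s hsJ hs0)⟩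
  · rintro ⟨j, hj, hs⟩
    by_cases hsJ : s ∈ J
    · refine Or.inr ⟨hsJ, ?_⟩
      rintro rfl
      simp at hs
    · exact Or.inl ⟨hsJ, j, hj, hs⟩

theorem mul_notMem_annihilator (hJ : IsIdealIn Set.univ J) (hJ0 : NoZeroDivisorsOn J)
    {a b : S} (ha : a ∉ annihilator J) (hb : b ∉ annihilator J) :
    a * b ∉ annihilator J := by
  obtain ⟨j, hj, hj0⟩ : ∃ j ∈ J, j ≠ 0 := by
    by_contra! h
    exact hb fun j hj => by simp [h j hj]
  have hbj := (mul_ne_zero_of_notMem_annihilator hJ hJ0 hb hj hj0).1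
  have habj := (mul_ne_zero_of_notMem_annihilator hJ hJ0 ha (hJ.mul_mem_left b hj) hbj).1
  exact fun h => habj (by rw [← mul_assoc, (h j hj).1])

theorem Fset_eq (hJ : IsIdealIn Set.univ J) (hJ0 : NoZeroDivisorsOn J)
    {j₀ : S} (hj₀ : j₀ ∈ J) (hj₀0 : j₀ ≠ 0) :
    Fset J = {s | s ∉ J ∧ ∀ j ∈ J, j ≠ 0 → ∀ j' ∈ J, j' ≠ 0 →
        s * j ≠ 0 ∧ j * s ≠ 0 ∧ j' * (s * j) ≠ 0} := by
  ext s
  constructor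
  · intro hs
    have hsA : s ∉ annihilator J := by
      rw [← Set.mem_compl_iff, ← Fset_union_eq_compl_annihilator hJ0]
      exact Or.inl hs
    refine ⟨hs.1, fun j hj hj0 j' hj' hj'0 => ?_⟩
    obtain ⟨hsj, hjs⟩ := mul_ne_zero_of_notMem_annihilator hJ hJ0 hsA hj hj0
    exact ⟨hsj, hjs, hJ0 j' hj' hj'0 _ (hJ.mul_mem_left s hj) hsj⟩
  · rintro ⟨hsJ, hs⟩
    exact ⟨hsJ, j₀, hj₀, Or.inl (hs j₀ hj₀ hj₀0 j₀ hj₀ hj₀0).1⟩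

end ZeroDivisors

theorem stmt10_general {S : Type*} [SemigroupWithZero S]
    (J : Set S) (hJ : IsIdealIn Set.univ J) (h0 : (0 : S) ∈ J)
    {G I L : Type*} [Group G] [Nonempty I] [Nonempty L]
    (P : L → I → Option G) (hP : ∀ l i, P l i ≠ none)
    (φ : S → ReesM0 G I L P)
    (hom : ∀ a ∈ J, ∀ b ∈ J, φ (a * b) = φ a * φ b)
    (hinj : ∀ a ∈ J, ∀ b ∈ J, φ a = φ b → a = b)
    (hsurj : ∀ z : ReesM0 G I L P, ∃ a ∈ J, φ a = z)
    (hz : φ 0 = (none : Option (G × I × L))) :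
    Fset J = {s | s ∉ J ∧ ∀ j ∈ J, j ≠ 0 → ∀ j' ∈ J, j' ≠ 0 →
        s * j ≠ 0 ∧ j * s ≠ 0 ∧ j' * (s * j) ≠ 0} ∧
    (∀ a ∈ Fset J ∪ (J \ {0}), ∀ b ∈ Fset J ∪ (J \ {0}),
        a * b ∈ Fset J ∪ (J \ {0})) ∧
    IsIdealIn Set.univ (Set.univ \ (Fset J ∪ (J \ {0}))) := by
  have hJ0 : NoZeroDivisorsOn J := noZeroDivisorsOn_of_reesM0 hP h0 φ hom hinj hz
  obtain ⟨i⟩ := ‹Nonempty I›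
  obtain ⟨l⟩ := ‹Nonempty L›
  obtain ⟨j, hj, hφj⟩ := hsurj (ReesM0.elem 1 i l)
  have hj0 : j ≠ 0 := by
    rintro rfl
    exact Option.some_ne_none _ (hφj.symm.trans hz)
  rw [Fset_union_eq_compl_annihilator hJ0, ← Set.compl_eq_univ_sdiff, compl_compl]
  exact ⟨Fset_eq hJ hJ0 hj hj0, fun a ha b hb => mul_notMem_annihilator hJ hJ0 ha hb,
    isIdealIn_annihilator hJ⟩

/-- Let `S` be a finite semigroup with zero `θ` and `J` an ideal of `S` isomorphic
(via `φ`) to a regular Rees matrix semigroup `M⁰(G, I, Λ; P)` all of whose sandwich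
entries are non-zero.  Then `F_J` has the stated description, `F_J ∪ (J \ {θ})` is
a subsemigroup of `S`, and `F'_J = S \ (F_J ∪ (J \ {θ}))` is an ideal of `S`. -/
theorem stmt10 {S : Type*} [SemigroupWithZero S] [Finite S]
    (J : Set S) (hJ : IsIdealIn Set.univ J) (h0 : (0 : S) ∈ J)
    {G I L : Type*} [Group G] [Nonempty I] [Nonempty L]
    (P : L → I → Option G) (hP : ∀ l i, P l i ≠ none)
    (φ : S → ReesM0 G I L P)
    (hom : ∀ a ∈ J, ∀ b ∈ J, φ (a * b) = φ a * φ b)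
    (hinj : ∀ a ∈ J, ∀ b ∈ J, φ a = φ b → a = b)
    (hsurj : ∀ z : ReesM0 G I L P, ∃ a ∈ J, φ a = z)
    (hz : φ 0 = (none : Option (G × I × L))) :
    Fset J = {s | s ∉ J ∧ ∀ j ∈ J, j ≠ 0 → ∀ j' ∈ J, j' ≠ 0 →
        s * j ≠ 0 ∧ j * s ≠ 0 ∧ j' * (s * j) ≠ 0} ∧
    (∀ a ∈ Fset J ∪ (J \ {0}), ∀ b ∈ Fset J ∪ (J \ {0}),
        a * b ∈ Fset J ∪ (J \ {0})) ∧
    IsIdealIn Set.univ (Set.univ \ (Fset J ∪ (J \ {0}))) :=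
  stmt10_general J hJ h0 P hP φ hom hinj hsurj hz
end

section
/- Let S be a pseudo-nilpotent finite semigroup, J an ideal of S with J a regular, non-nilpotent Rees matrix semigroup M^0(G, I, Λ; P), and let Φ: S → (I × Λ)^0 be the pseudo-nilpotent homomorphism. If a, b ∈ F_J ∪ (J \ {θ}) and Φ(a) ≠ Φ(b), then there is an edge in N_S between a and b, i.e., ⟨a, b⟩ is not Mal'cev nilpotent. -/
/-- Multiplication of the rectangular band `(I × Λ)⁰` with zero `none` adjoined:
`(i, λ)(i', λ') = (i, λ')`. -/
def rbMul {I L : Type*} : Option (I × L) → Option (I × L) → Option (I × L)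
  | some (i, _), some (_, l) => some (i, l)
  | _, _ => none

/-!
Under a homomorphism `Φ` into the rectangular band `(I × Λ)⁰`, the Mal'cev step
`λ w ρ, ρ w λ` sends two distinct non-zero images `(i, λ) ≠ (j, μ)` to `(i, μ) ≠ (j, λ)`,
again distinct and non-zero, as long as the parameter `w` is not mapped to zero. Hence the
Mal'cev sequences of `a, b` never meet when `Φ a ≠ Φ b` are non-zero, so `⟨a, b⟩` is not
Mal'cev nilpotent.
-/

section RectangularBand

variable {S : Type*} [Semigroup S] {I L : Type*} {Φ : S → Option (I × L)}

@[simp]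
theorem rbMul_some_some (u v : I × L) : rbMul (some u) (some v) = some (u.1, v.2) := rfl

theorem map_mulW_of_rbMul (hΦ : ∀ a b, Φ (a * b) = rbMul (Φ a) (Φ b)) {a b : S}
    {w : Option S} {u v : I × L} (ha : Φ a = some u) (hb : Φ b = some v)
    (hw : ∀ c, w = some c → Φ c ≠ none) :
    Φ (mulW a w b) = some (u.1, v.2) := by
  cases w with
  | none => simp only [mulW, hΦ, ha, hb, rbMul_some_some]
  | some c =>
    obtain ⟨r, hr⟩ := Option.ne_none_iff_exists'.mp (hw c rfl)
    simp only [mulW, hΦ, ha, hb, hr, rbMul_some_some]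

theorem exists_map_malcev_ne_of_rbMul (hΦ : ∀ a b, Φ (a * b) = rbMul (Φ a) (Φ b))
    {x y : S} {w : ℕ → Option S} (hw : ∀ k c, w k = some c → Φ c ≠ none)
    (hx : Φ x ≠ none) (hy : Φ y ≠ none) (hxy : Φ x ≠ Φ y) (n : ℕ) :
    ∃ u v, Φ (malcev x y w n).1 = some u ∧ Φ (malcev x y w n).2 = some v ∧ u ≠ v := by
  induction n with
  | zero =>
    obtain ⟨u, hu⟩ := Option.ne_none_iff_exists'.mp hx
    obtain ⟨v, hv⟩ := Option.ne_none_iff_exists'.mp hy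
    exact ⟨u, v, hu, hv, fun h => hxy (by rw [hu, hv, h])⟩
  | succ k ih =>
    obtain ⟨u, v, hu, hv, huv⟩ := ih
    refine ⟨(u.1, v.2), (v.1, u.2), map_mulW_of_rbMul hΦ hu hv (hw k),
      map_mulW_of_rbMul hΦ hv hu (hw k), fun h => huv ?_⟩
    simp only [Prod.mk.injEq] at h
    exact Prod.ext h.1 h.2.symm

theorem not_setMN_closure_pair_of_rbMul (hΦ : ∀ a b, Φ (a * b) = rbMul (Φ a) (Φ b))
    {a b : S} (ha : Φ a ≠ none) (hb : Φ b ≠ none) (hab : Φ a ≠ Φ b) :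
    ¬ SetMN (Subsemigroup.closure ({a, b} : Set S) : Set S) := by
  rintro ⟨n, -, hn⟩
  obtain ⟨u, v, hu, hv, huv⟩ := exists_map_malcev_ne_of_rbMul (w := fun _ => none) hΦ
    (fun _ _ h => nomatch h) ha hb hab n
  have hmeet := hn a (Subsemigroup.subset_closure (by simp))
    b (Subsemigroup.subset_closure (by simp)) (fun _ => none) (fun _ _ h => nomatch h)
  rw [hmeet, hv] at hu
  exact huv (Option.some_injective _ hu).symm

end RectangularBand

theorem stmt12_general {S : Type*} [SemigroupWithZero S]
    (J : Set S)
    {I L : Type*}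
    (Φ : S → Option (I × L))
    (hΦhom : ∀ a b : S, Φ (a * b) = rbMul (Φ a) (Φ b))
    (hΦzero : ∀ a : S, (Φ a = none ↔ a ∈ Set.univ \ (Fset J ∪ (J \ {0})))) :
    ∀ a ∈ Fset J ∪ (J \ {0}), ∀ b ∈ Fset J ∪ (J \ {0}), Φ a ≠ Φ b →
      a ≠ b ∧ ¬ SetMN (Subsemigroup.closure ({a, b} : Set S) : Set S) := by
  intro a ha b hb hab
  have hΦ_ne_none : ∀ c ∈ Fset J ∪ (J \ {0}), Φ c ≠ none :=
    fun c hc hnone => ((hΦzero c).1 hnone).2 hc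
  exact ⟨fun h => hab (congrArg Φ h),
    not_setMN_closure_pair_of_rbMul hΦhom (hΦ_ne_none a ha) (hΦ_ne_none b hb) hab⟩

/-- Let `S` be a pseudo-nilpotent finite semigroup with zero, `J` an ideal of `S`
isomorphic (via `φ`) to a regular non-nilpotent Rees matrix semigroup
`M⁰(G, I, Λ; P)` with all entries of `P` non-zero, and `Φ : S → (I × Λ)⁰` the
pseudo-nilpotent homomorphism.  If `a, b ∈ F_J ∪ (J \ {θ})` and `Φ(a) ≠ Φ(b)`,
then there is an edge of `N_S` between `a` and `b`, i.e. `⟨a, b⟩` is not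
Mal'cev nilpotent. -/
theorem stmt12 {S : Type*} [SemigroupWithZero S] [Finite S] (hPN : IsPN S)
    (J : Set S) (hJ : IsIdealIn Set.univ J) (h0 : (0 : S) ∈ J)
    {G I L : Type*} [Group G] [Nonempty I] [Nonempty L]
    (P : L → I → Option G) (hP : ∀ l i, P l i ≠ none)
    (φ : S → ReesM0 G I L P)
    (hom : ∀ a ∈ J, ∀ b ∈ J, φ (a * b) = φ a * φ b)
    (hinj : ∀ a ∈ J, ∀ b ∈ J, φ a = φ b → a = b)
    (hsurj : ∀ z : ReesM0 G I L P, ∃ a ∈ J, φ a = z)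
    (hz : φ 0 = (none : Option (G × I × L)))
    (hJnotnil : ¬ SetMN J)
    (Φ : S → Option (I × L))
    (hΦhom : ∀ a b : S, Φ (a * b) = rbMul (Φ a) (Φ b))
    (hΦzero : ∀ a : S, (Φ a = none ↔ a ∈ Set.univ \ (Fset J ∪ (J \ {0}))))
    (hΦspec : ∀ a : S, ∀ e : I, ∀ f : L, Φ a = some (e, f) →
      (∀ j ∈ J, j ≠ 0 → ∃ g : G, ∃ μ : L, φ (a * j) = ReesM0.elem g e μ) ∧
      (∀ j ∈ J, j ≠ 0 → ∃ g : G, ∃ i : I, φ (j * a) = ReesM0.elem g i f)) :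
    ∀ a ∈ Fset J ∪ (J \ {0}), ∀ b ∈ Fset J ∪ (J \ {0}), Φ a ≠ Φ b →
      a ≠ b ∧ ¬ SetMN (Subsemigroup.closure ({a, b} : Set S) : Set S) :=
  stmt12_general J Φ hΦhom hΦzero
end
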